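/- arXiv:0802.3153 — 6 statements merged into one kernel-verified Lean document; each statement's English description precedes it below -/
import Mathlib

section
/- There is a constant K ≥ 0 depending only on M, δ, p, T (one may take K = 2^{p−1}(M^{p+1}T + 2M)/δ + M^p T) such that, for any x₀ ∈ ℝ^N, any t₀ ∈ [0,T), and any curve x̄ that is optimal for the initial condition (x₀, t₀) (i.e. x̄ attains the infimum defining u(x₀,t₀)), one has ∫_{t₀}^T |x̄'(s)|^p ds ≤ K. -/
/-!
An optimal curve is compared with an almost free competitor: an Euler polygon for
`x' = -f(x, t)`. Since `f` is uniformly continuous on compact sets, the polygon with a fine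
enough mesh makes `|f(x, t) + x'|` uniformly small, so its running cost is arbitrarily small and
the value function is at most `sup |g| ≤ M` (no exact solution, hence no Peano theorem, is
needed). For an optimal curve `x̄` this gives `δ ∫ |f + x̄'|^p ≤ 2M`, and then
`|x̄'|^p ≤ 2^{p-1} (|f + x̄'|^p + |f|^p)` bounds `∫ |x̄'|^p` by `2^{p-1} (2M/δ + M^p T)`, which is
at most the stated constant because `δ ≤ M`.
-/

open MeasureTheory Set intervalIntegral

noncomputable section

/-- The curve starting at `x` at time `t` with (a.e.) derivative `v`. -/
def curveOf {N : ℕ} (x : EuclideanSpace ℝ (Fin N)) (t : ℝ)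
    (v : ℝ → EuclideanSpace ℝ (Fin N)) : ℝ → EuclideanSpace ℝ (Fin N) :=
  fun s => x + ∫ r in t..s, v r

/-- The cost of the curve starting at `x` at time `t` with derivative `v`:
`∫_t^T a(x(s),s) |f(x(s),s) + x'(s)|^p ds + g(x(T))`. -/
def costOf {N : ℕ} (T p : ℝ) (a : EuclideanSpace ℝ (Fin N) → ℝ → ℝ)
    (f : EuclideanSpace ℝ (Fin N) → ℝ → EuclideanSpace ℝ (Fin N))
    (g : EuclideanSpace ℝ (Fin N) → ℝ)
    (x : EuclideanSpace ℝ (Fin N)) (t : ℝ) (v : ℝ → EuclideanSpace ℝ (Fin N)) : ℝ :=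
  (∫ s in t..T, a (curveOf x t v s) s * ‖f (curveOf x t v s) s + v s‖ ^ p)
    + g (curveOf x t v T)

/-- A curve (given through its derivative `v`) is admissible for initial time `t` if its
derivative belongs to `L^p([t,T])`. -/
def AdmissibleDeriv {N : ℕ} (T p t : ℝ) (v : ℝ → EuclideanSpace ℝ (Fin N)) : Prop :=
  MemLp v (ENNReal.ofReal p) (volume.restrict (Icc t T))

/-- The value function of the calculus of variations problem. -/
def valueFn {N : ℕ} (T p : ℝ) (a : EuclideanSpace ℝ (Fin N) → ℝ → ℝ)
    (f : EuclideanSpace ℝ (Fin N) → ℝ → EuclideanSpace ℝ (Fin N))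
    (g : EuclideanSpace ℝ (Fin N) → ℝ)
    (x : EuclideanSpace ℝ (Fin N)) (t : ℝ) : ℝ :=
  sInf {c : ℝ | ∃ v, AdmissibleDeriv T p t v ∧ costOf T p a f g x t v = c}

/-- A curve (given through its derivative `v`) is optimal for the initial condition `(x, t)`
if it is admissible and its cost realizes the infimum defining `valueFn`. -/
def IsOptimalCurve {N : ℕ} (T p : ℝ) (a : EuclideanSpace ℝ (Fin N) → ℝ → ℝ)
    (f : EuclideanSpace ℝ (Fin N) → ℝ → EuclideanSpace ℝ (Fin N))
    (g : EuclideanSpace ℝ (Fin N) → ℝ)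
    (x : EuclideanSpace ℝ (Fin N)) (t : ℝ) (v : ℝ → EuclideanSpace ℝ (Fin N)) : Prop :=
  AdmissibleDeriv T p t v ∧ costOf T p a f g x t v = valueFn T p a f g x t

/-- The standing assumptions : `a`, `f`, `g` are continuous, bounded by `M`, and `a ≥ δ`. -/
def StandardHyps {N : ℕ} (T M δ : ℝ) (a : EuclideanSpace ℝ (Fin N) → ℝ → ℝ)
    (f : EuclideanSpace ℝ (Fin N) → ℝ → EuclideanSpace ℝ (Fin N))
    (g : EuclideanSpace ℝ (Fin N) → ℝ) : Prop :=
  ContinuousOn (fun q : EuclideanSpace ℝ (Fin N) × ℝ => a q.1 q.2) (univ ×ˢ Icc 0 T) ∧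
  ContinuousOn (fun q : EuclideanSpace ℝ (Fin N) × ℝ => f q.1 q.2) (univ ×ˢ Icc 0 T) ∧
  Continuous g ∧
  (∀ x t, t ∈ Icc 0 T → |a x t| ≤ M) ∧
  (∀ x t, t ∈ Icc 0 T → ‖f x t‖ ≤ M) ∧
  (∀ x, |g x| ≤ M) ∧
  (∀ x t, t ∈ Icc 0 T → δ ≤ a x t)

lemma norm_sub_rpow_le {E : Type*} [NormedAddCommGroup E] {p : ℝ} (hp : 1 ≤ p) (x y : E) :
    ‖x - y‖ ^ p ≤ 2 ^ (p - 1) * (‖x‖ ^ p + ‖y‖ ^ p) :=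
  calc ‖x - y‖ ^ p ≤ (‖x‖ + ‖y‖) ^ p := by gcongr; exact norm_sub_le x y
    _ ≤ _ := by exact_mod_cast NNReal.rpow_add_le_mul_rpow_add_rpow ‖x‖₊ ‖y‖₊ hp

lemma integral_norm_sub_rpow_le {α E : Type*} [MeasurableSpace α] {μ : Measure α}
    [NormedAddCommGroup E] {p : ℝ} (hp : 1 ≤ p) {u w : α → E}
    (hu : Integrable (fun s => ‖u s‖ ^ p) μ) (hw : Integrable (fun s => ‖w s‖ ^ p) μ) :
    ∫ s, ‖w s - u s‖ ^ p ∂μ ≤ 2 ^ (p - 1) * (∫ s, ‖w s‖ ^ p ∂μ + ∫ s, ‖u s‖ ^ p ∂μ) := by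
  rw [← integral_add hw hu, ← MeasureTheory.integral_const_mul]
  exact integral_mono_of_nonneg (.of_forall fun s => by positivity) ((hw.add hu).const_mul _)
    (.of_forall fun s => norm_sub_rpow_le hp _ _)

lemma integrable_norm_rpow_of_memLp {α E : Type*} [MeasurableSpace α] {μ : Measure α}
    [NormedAddCommGroup E] {p : ℝ} (hp : 0 < p) {u : α → E} (hu : MemLp u (ENNReal.ofReal p) μ) :
    Integrable (fun s => ‖u s‖ ^ p) μ := by
  simpa [ENNReal.toReal_ofReal hp.le] using
    hu.integrable_norm_rpow (by simpa using hp) ENNReal.ofReal_ne_top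

section EulerPolygon

variable {E : Type*} [NormedAddCommGroup E] [NormedSpace ℝ E]

def eulerNode (F : E → ℝ → E) (x₀ : E) (t₀ h : ℝ) : ℕ → E
  | 0 => x₀
  | i + 1 => eulerNode F x₀ t₀ h i - h • F (eulerNode F x₀ t₀ h i) (t₀ + i * h)

-- Truncated subtraction gives every `s ≤ t₀` the index `0`.
def meshIndex (t₀ h s : ℝ) : ℕ := ⌈(s - t₀) / h⌉₊ - 1

def eulerVelocity (F : E → ℝ → E) (x₀ : E) (t₀ h s : ℝ) : E :=
  -F (eulerNode F x₀ t₀ h (meshIndex t₀ h s)) (t₀ + meshIndex t₀ h s * h)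

variable {F : E → ℝ → E} {x₀ : E} {t₀ h s : ℝ}

lemma meshIndex_eq {i : ℕ} (hh : 0 < h) (hs : s ∈ Ioc (t₀ + i * h) (t₀ + i * h + h)) :
    meshIndex t₀ h s = i := by
  have hceil : ⌈(s - t₀) / h⌉₊ = i + 1 := by
    rw [Nat.ceil_eq_iff (Nat.succ_ne_zero i), lt_div_iff₀ hh, div_le_iff₀ hh]
    push_cast
    constructor <;> linarith [hs.1, hs.2]
  simp [meshIndex, hceil]

lemma meshIndex_self : meshIndex t₀ h t₀ = 0 := by
  simp [meshIndex]

lemma mem_Ioc_meshIndex (hh : 0 < h) (hs : t₀ < s) :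
    s ∈ Ioc (t₀ + meshIndex t₀ h s * h) (t₀ + meshIndex t₀ h s * h + h) := by
  have hq : 0 < (s - t₀) / h := div_pos (sub_pos.2 hs) hh
  have hcast : (meshIndex t₀ h s : ℝ) = ⌈(s - t₀) / h⌉₊ - 1 := by
    rw [meshIndex, Nat.cast_sub (Nat.ceil_pos.2 hq), Nat.cast_one]
  have hlt := (lt_div_iff₀ hh).1 (by linarith [Nat.ceil_lt_add_one hq.le] :
    (⌈(s - t₀) / h⌉₊ - 1 : ℝ) < (s - t₀) / h)
  have hle := (div_le_iff₀ hh).1 (Nat.le_ceil ((s - t₀) / h))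
  rw [hcast]
  constructor <;> linarith

lemma measurable_meshIndex : Measurable (meshIndex t₀ h) :=
  (measurable_from_nat (f := fun c : ℕ => c - 1)).comp
    ((measurable_id.sub_const t₀).div_const h).nat_ceil

lemma stronglyMeasurable_eulerVelocity : StronglyMeasurable (eulerVelocity F x₀ t₀ h) :=
  StronglyMeasurable.of_discrete.comp_measurable
    (f := fun i : ℕ => -F (eulerNode F x₀ t₀ h i) (t₀ + i * h)) measurable_meshIndex

lemma integral_eulerVelocity_of_mem_Icc [CompleteSpace E] (hh : 0 < h) {i : ℕ}
    (hs : s ∈ Icc (t₀ + i * h) (t₀ + i * h + h)) :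
    IntervalIntegrable (eulerVelocity F x₀ t₀ h) volume (t₀ + i * h) s ∧
      ∫ r in t₀ + i * h..s, eulerVelocity F x₀ t₀ h r
        = -((s - (t₀ + i * h)) • F (eulerNode F x₀ t₀ h i) (t₀ + i * h)) := by
  have hconst : ∀ r ∈ uIoc (t₀ + i * h) s,
      eulerVelocity F x₀ t₀ h r = -F (eulerNode F x₀ t₀ h i) (t₀ + i * h) := by
    intro r hr
    rw [uIoc_of_le hs.1] at hr
    simp only [eulerVelocity, meshIndex_eq hh ⟨hr.1, hr.2.trans hs.2⟩]
  refine ⟨(intervalIntegrable_const (c := -F (eulerNode F x₀ t₀ h i) (t₀ + i * h))).congr_ae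
    ((ae_restrict_iff' measurableSet_uIoc).2 (.of_forall fun r hr => (hconst r hr).symm)), ?_⟩
  rw [integral_congr_ae (.of_forall hconst), intervalIntegral.integral_const, smul_neg]

lemma add_integral_eulerVelocity [CompleteSpace E] (hh : 0 < h) (i : ℕ) :
    ∀ s ∈ Icc (t₀ + i * h) (t₀ + i * h + h),
      IntervalIntegrable (eulerVelocity F x₀ t₀ h) volume t₀ s ∧
        x₀ + ∫ r in t₀..s, eulerVelocity F x₀ t₀ h r
          = eulerNode F x₀ t₀ h i
            - (s - (t₀ + i * h)) • F (eulerNode F x₀ t₀ h i) (t₀ + i * h) := by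
  induction i with
  | zero =>
    intro s hs
    simpa [eulerNode, sub_eq_add_neg] using
      integral_eulerVelocity_of_mem_Icc (F := F) (x₀ := x₀) (i := 0) hh hs
  | succ i ih =>
    intro s hs
    have hnode : t₀ + ((i + 1 : ℕ) : ℝ) * h = t₀ + i * h + h := by push_cast; ring
    rw [hnode] at hs ⊢
    obtain ⟨hint₁, heq₁⟩ := ih _ ⟨by linarith, le_rfl⟩
    rw [← hnode] at hs
    obtain ⟨hint₂, heq₂⟩ := integral_eulerVelocity_of_mem_Icc (F := F) (x₀ := x₀) hh hs
    rw [hnode] at hint₂ heq₂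
    refine ⟨hint₁.trans hint₂, ?_⟩
    rw [← integral_add_adjacent_intervals hint₁ hint₂, ← add_assoc, heq₁, heq₂,
      add_sub_cancel_left, ← sub_eq_add_neg]
    rfl

lemma add_integral_eulerVelocity_node [CompleteSpace E] (hh : 0 < h) (i : ℕ) :
    x₀ + ∫ r in t₀..t₀ + i * h, eulerVelocity F x₀ t₀ h r = eulerNode F x₀ t₀ h i := by
  rw [(add_integral_eulerVelocity hh i _ ⟨le_rfl, by linarith⟩).2, sub_self, zero_smul, sub_zero]

lemma norm_eulerVelocity_le {T M : ℝ} (hh : 0 < h) (hFM : ∀ x, ∀ t ∈ Icc t₀ T, ‖F x t‖ ≤ M)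
    (hs : s ∈ Icc t₀ T) : ‖eulerVelocity F x₀ t₀ h s‖ ≤ M := by
  rw [eulerVelocity, norm_neg]
  refine hFM _ _ ⟨le_add_of_nonneg_right (by positivity), ?_⟩
  rcases hs.1.eq_or_lt with rfl | hlt
  · simpa [meshIndex_self] using hs.2
  · exact ((mem_Ioc_meshIndex hh hlt).1.trans_le hs.2).le

lemma norm_integral_eulerVelocity_le {T M : ℝ} (hh : 0 < h)
    (hFM : ∀ x, ∀ t ∈ Icc t₀ T, ‖F x t‖ ≤ M) (hs : s ∈ Icc t₀ T) :
    ‖∫ r in t₀..s, eulerVelocity F x₀ t₀ h r‖ ≤ M * (T - t₀) := by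
  have hM : 0 ≤ M := (norm_nonneg _).trans (hFM x₀ t₀ ⟨le_rfl, hs.1.trans hs.2⟩)
  refine (norm_integral_le_of_norm_le_const fun r hr => norm_eulerVelocity_le hh hFM ?_).trans ?_
  · rw [uIoc_of_le hs.1] at hr
    exact ⟨hr.1.le, hr.2.trans hs.2⟩
  · rw [abs_of_nonneg (sub_nonneg.2 hs.1)]
    gcongr
    exact hs.2

theorem exists_eulerVelocity_approx [ProperSpace E] {T M ε : ℝ} (x₀ : E) (ht : t₀ < T)
    (hF : ContinuousOn (fun q : E × ℝ => F q.1 q.2) (univ ×ˢ Icc t₀ T))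
    (hFM : ∀ x, ∀ t ∈ Icc t₀ T, ‖F x t‖ ≤ M) (hε : 0 < ε) :
    ∃ h > 0, (∀ s ∈ Icc t₀ T, ‖eulerVelocity F x₀ t₀ h s‖ ≤ M) ∧
      ∀ s ∈ Ioc t₀ T,
        ‖F (x₀ + ∫ r in t₀..s, eulerVelocity F x₀ t₀ h r) s + eulerVelocity F x₀ t₀ h s‖ < ε := by
  have hM : 0 ≤ M := (norm_nonneg _).trans (hFM x₀ t₀ ⟨le_rfl, ht.le⟩)
  set K := Metric.closedBall x₀ (M * (T - t₀)) ×ˢ Icc t₀ T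
  obtain ⟨d, hd, hF_uc⟩ := Metric.uniformContinuousOn_iff.1
    (((isCompact_closedBall _ _).prod isCompact_Icc).uniformContinuousOn_of_continuous
      (hF.mono (prod_mono (subset_univ _) le_rfl)) : UniformContinuousOn _ K) ε hε
  set h := d / (M + 2)
  have hh : 0 < h := by positivity
  have hhd : (M + 1) * h < d := by
    rw [mul_div_assoc', div_lt_iff₀ (by positivity)]
    nlinarith
  have hx_mem : ∀ s ∈ Icc t₀ T, (x₀ + ∫ r in t₀..s, eulerVelocity F x₀ t₀ h r, s) ∈ K :=
    fun s hs => ⟨by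
      rw [Metric.mem_closedBall, dist_eq_norm, add_sub_cancel_left]
      exact norm_integral_eulerVelocity_le hh hFM hs, hs⟩
  refine ⟨h, hh, fun s hs => norm_eulerVelocity_le hh hFM hs, fun s hs => ?_⟩
  set i := meshIndex t₀ h s
  set τ := t₀ + i * h
  have hsi : s ∈ Ioc τ (τ + h) := mem_Ioc_meshIndex hh hs.1
  have hτ : τ ∈ Icc t₀ T := ⟨le_add_of_nonneg_right (by positivity), (hsi.1.trans_le hs.2).le⟩
  have hnode := add_integral_eulerVelocity_node (F := F) (x₀ := x₀) (t₀ := t₀) hh i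
  have hcurve := (add_integral_eulerVelocity (F := F) (x₀ := x₀) hh i s ⟨hsi.1.le, hsi.2⟩).2
  have hstep :
      ‖(x₀ + ∫ r in t₀..s, eulerVelocity F x₀ t₀ h r) - eulerNode F x₀ t₀ h i‖ ≤ h * M := by
    rw [hcurve, sub_sub_cancel_left, norm_neg, norm_smul,
      Real.norm_of_nonneg (sub_nonneg.2 hsi.1.le)]
    gcongr
    · linarith [hsi.2]
    · exact hFM _ _ hτ
  have hclose := hF_uc _ (hx_mem s ⟨hs.1.le, hs.2⟩) _ (hx_mem τ hτ) (by
    rw [Prod.dist_eq, max_lt_iff, dist_eq_norm, hnode, Real.dist_eq,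
      abs_of_nonneg (sub_nonneg.2 hsi.1.le)]
    constructor <;> linarith [hsi.2, mul_nonneg hM hh.le])
  rw [dist_eq_norm, hnode] at hclose
  rw [show eulerVelocity F x₀ t₀ h s = -F (eulerNode F x₀ t₀ h i) τ from rfl, ← sub_eq_add_neg]
  exact hclose

end EulerPolygon

section ValueFunction

variable {N : ℕ} {T p M δ : ℝ} {a : EuclideanSpace ℝ (Fin N) → ℝ → ℝ}
  {f : EuclideanSpace ℝ (Fin N) → ℝ → EuclideanSpace ℝ (Fin N)}
  {g : EuclideanSpace ℝ (Fin N) → ℝ} {x₀ : EuclideanSpace ℝ (Fin N)} {t₀ : ℝ}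
  {v : ℝ → EuclideanSpace ℝ (Fin N)}

lemma valueFn_le_costOf (hyp : StandardHyps T M δ a f g) (hδ : 0 ≤ δ) (ht₀ : t₀ ∈ Icc 0 T)
    (hv : AdmissibleDeriv T p t₀ v) : valueFn T p a f g x₀ t₀ ≤ costOf T p a f g x₀ t₀ v := by
  obtain ⟨-, -, -, -, -, hgM, hδa⟩ := hyp
  refine csInf_le ⟨-M, ?_⟩ ⟨v, hv, rfl⟩
  rintro c ⟨w, -, rfl⟩
  have hrun : 0 ≤ ∫ s in t₀..T, a (curveOf x₀ t₀ w s) s * ‖f (curveOf x₀ t₀ w s) s + w s‖ ^ p :=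
    integral_nonneg ht₀.2 fun s hs =>
      mul_nonneg (hδ.trans (hδa _ _ ⟨ht₀.1.trans hs.1, hs.2⟩)) (by positivity)
  unfold costOf
  linarith [neg_abs_le (g (curveOf x₀ t₀ w T)), hgM (curveOf x₀ t₀ w T)]

lemma valueFn_le (hyp : StandardHyps T M δ a f g) (hδ : 0 ≤ δ) (hM : 0 < M) (hp : 0 < p)
    (ht₀ : t₀ ∈ Ico 0 T) : valueFn T p a f g x₀ t₀ ≤ M := by
  refine le_of_forall_pos_le_add fun η hη => ?_
  have hT : 0 < T - t₀ := sub_pos.2 ht₀.2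
  set ε := (η / (M * (T - t₀))) ^ p⁻¹
  have hεp : M * ε ^ p * (T - t₀) = η := by
    rw [Real.rpow_inv_rpow (by positivity) hp.ne']
    field_simp
  obtain ⟨-, hf, -, haM, hfM, hgM, -⟩ := id hyp
  obtain ⟨h, -, hv_le, hv_approx⟩ := exists_eulerVelocity_approx x₀ ht₀.2
    (hf.mono (prod_mono subset_rfl (Icc_subset_Icc_left ht₀.1)))
    (fun x t ht => hfM x t ⟨ht₀.1.trans ht.1, ht.2⟩) (by positivity : 0 < ε)
  set v := eulerVelocity f x₀ t₀ h
  have hadm : AdmissibleDeriv T p t₀ v :=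
    MemLp.of_bound stronglyMeasurable_eulerVelocity.aestronglyMeasurable M
      ((ae_restrict_iff' measurableSet_Icc).2 (.of_forall hv_le))
  have hrun : ∫ s in t₀..T, a (curveOf x₀ t₀ v s) s * ‖f (curveOf x₀ t₀ v s) s + v s‖ ^ p
      ≤ η := by
    calc _ ≤ M * ε ^ p * |T - t₀| := by
          refine (le_abs_self _).trans ?_
          rw [← Real.norm_eq_abs]
          refine norm_integral_le_of_norm_le_const fun s hs => ?_
          rw [uIoc_of_le ht₀.2.le] at hs
          rw [norm_mul, Real.norm_eq_abs, Real.norm_of_nonneg (by positivity)]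
          gcongr
          · exact haM _ _ ⟨ht₀.1.trans hs.1.le, hs.2⟩
          · exact (hv_approx s hs).le
      _ = η := by rw [abs_of_pos hT, hεp]
  calc valueFn T p a f g x₀ t₀ ≤ costOf T p a f g x₀ t₀ v :=
        valueFn_le_costOf hyp hδ (Ico_subset_Icc_self ht₀) hadm
    _ ≤ η + M := add_le_add hrun ((le_abs_self _).trans (hgM _))
    _ = M + η := add_comm _ _

lemma continuousOn_curveOf (hp : 1 ≤ p) (ht : t₀ ≤ T) (hv : AdmissibleDeriv T p t₀ v) :
    ContinuousOn (curveOf x₀ t₀ v) (Icc t₀ T) := by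
  have hint : IntegrableOn v (uIcc t₀ T) := by
    rw [uIcc_of_le ht]
    refine memLp_one_iff_integrable.1 (hv.mono_exponent ?_)
    simpa using ENNReal.ofReal_le_ofReal hp
  have := continuousOn_const.add (continuousOn_primitive_interval hint) (f := fun _ => x₀)
  rwa [uIcc_of_le ht] at this

lemma aestronglyMeasurable_comp_curveOf {β : Type*} [TopologicalSpace β]
    [TopologicalSpace.PseudoMetrizableSpace β] {F : EuclideanSpace ℝ (Fin N) → ℝ → β}
    (hF : ContinuousOn (fun q : EuclideanSpace ℝ (Fin N) × ℝ => F q.1 q.2) (univ ×ˢ Icc 0 T))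
    (hp : 1 ≤ p) (ht₀ : t₀ ∈ Icc 0 T) (hv : AdmissibleDeriv T p t₀ v) :
    AEStronglyMeasurable (fun s => F (curveOf x₀ t₀ v s) s) (volume.restrict (Icc t₀ T)) :=
  (hF.comp ((continuousOn_curveOf hp ht₀.2 hv).prodMk continuousOn_id)
    fun _ hs => ⟨mem_univ _, ht₀.1.trans hs.1, hs.2⟩).aestronglyMeasurable measurableSet_Icc

lemma memLp_comp_curveOf (hyp : StandardHyps T M δ a f g) (hp : 1 ≤ p) (ht₀ : t₀ ∈ Icc 0 T)
    (hv : AdmissibleDeriv T p t₀ v) :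
    MemLp (fun s => f (curveOf x₀ t₀ v s) s) (ENNReal.ofReal p) (volume.restrict (Icc t₀ T)) := by
  obtain ⟨-, hf, -, -, hfM, -, -⟩ := hyp
  exact MemLp.of_bound (aestronglyMeasurable_comp_curveOf hf hp ht₀ hv) M
    ((ae_restrict_iff' measurableSet_Icc).2
      (.of_forall fun _ hs => hfM _ _ ⟨ht₀.1.trans hs.1, hs.2⟩))

lemma integral_norm_add_rpow_le_of_isOptimalCurve (hyp : StandardHyps T M δ a f g)
    (hδ : 0 < δ) (hM : 0 < M) (hp : 1 ≤ p) (ht₀ : t₀ ∈ Ico 0 T)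
    (hv : IsOptimalCurve T p a f g x₀ t₀ v) :
    ∫ s in Icc t₀ T, ‖f (curveOf x₀ t₀ v s) s + v s‖ ^ p ≤ 2 * M / δ := by
  have hvalue := valueFn_le (x₀ := x₀) hyp hδ.le hM (by linarith) ht₀
  set x := curveOf x₀ t₀ v
  have hw : Integrable (fun s => ‖f (x s) s + v s‖ ^ p) (volume.restrict (Icc t₀ T)) :=
    integrable_norm_rpow_of_memLp (by linarith)
      ((memLp_comp_curveOf hyp hp (Ico_subset_Icc_self ht₀) hv.1).add hv.1)
  obtain ⟨ha, -, -, haM, -, hgM, hδa⟩ := hyp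
  have hax := aestronglyMeasurable_comp_curveOf (x₀ := x₀) ha hp (Ico_subset_Icc_self ht₀) hv.1
  have hrun : ∫ s in Icc t₀ T, a (x s) s * ‖f (x s) s + v s‖ ^ p
      = valueFn T p a f g x₀ t₀ - g (x T) := by
    rw [← hv.2, costOf, integral_of_le ht₀.2.le, integral_Icc_eq_integral_Ioc, add_sub_cancel_right]
  rw [le_div_iff₀' hδ, ← MeasureTheory.integral_const_mul]
  calc ∫ s in Icc t₀ T, δ * ‖f (x s) s + v s‖ ^ p
      ≤ ∫ s in Icc t₀ T, a (x s) s * ‖f (x s) s + v s‖ ^ p := by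
        refine setIntegral_mono_on (hw.const_mul δ) (hw.bdd_mul (c := M) hax ?_) measurableSet_Icc
          fun s hs => by gcongr; exact hδa _ _ ⟨ht₀.1.trans hs.1, hs.2⟩
        exact (ae_restrict_iff' measurableSet_Icc).2
          (.of_forall fun s hs => haM _ _ ⟨ht₀.1.trans hs.1, hs.2⟩)
    _ = valueFn T p a f g x₀ t₀ - g (x T) := hrun
    _ ≤ 2 * M := by linarith [neg_abs_le (g (x T)), hgM (x T)]

lemma integral_norm_rpow_le_of_isOptimalCurve (hyp : StandardHyps T M δ a f g)
    (hδ : 0 < δ) (hM : 0 < M) (hp : 1 ≤ p) (ht₀ : t₀ ∈ Ico 0 T)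
    (hv : IsOptimalCurve T p a f g x₀ t₀ v) :
    ∫ s in t₀..T, ‖v s‖ ^ p ≤ 2 ^ (p - 1) * (2 * M / δ + M ^ p * T) := by
  set x := curveOf x₀ t₀ v
  have hfx := memLp_comp_curveOf (x₀ := x₀) hyp hp (Ico_subset_Icc_self ht₀) hv.1
  obtain ⟨-, -, -, -, hfM, -, -⟩ := id hyp
  have hfx_int : ∫ s in Icc t₀ T, ‖f (x s) s‖ ^ p ≤ M ^ p * T :=
    calc ∫ s in Icc t₀ T, ‖f (x s) s‖ ^ p ≤ ∫ s in Icc t₀ T, M ^ p := by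
          refine setIntegral_mono_on (integrable_norm_rpow_of_memLp (by linarith) hfx)
            (integrableOn_const (by simp)) measurableSet_Icc fun s hs => ?_
          gcongr
          exact hfM _ _ ⟨ht₀.1.trans hs.1, hs.2⟩
      _ = (T - t₀) * M ^ p := by
          rw [setIntegral_const, Real.volume_real_Icc_of_le ht₀.2.le, smul_eq_mul]
      _ ≤ M ^ p * T := by nlinarith [ht₀.1, Real.rpow_nonneg hM.le p]
  rw [integral_of_le ht₀.2.le, ← integral_Icc_eq_integral_Ioc]
  calc ∫ s in Icc t₀ T, ‖v s‖ ^ p = ∫ s in Icc t₀ T, ‖(f (x s) s + v s) - f (x s) s‖ ^ p := by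
        simp_rw [add_sub_cancel_left]
    _ ≤ 2 ^ (p - 1) * ((∫ s in Icc t₀ T, ‖f (x s) s + v s‖ ^ p) +
          ∫ s in Icc t₀ T, ‖f (x s) s‖ ^ p) :=
        integral_norm_sub_rpow_le hp (integrable_norm_rpow_of_memLp (by linarith) hfx)
          (integrable_norm_rpow_of_memLp (by linarith) (hfx.add hv.1))
    _ ≤ 2 ^ (p - 1) * (2 * M / δ + M ^ p * T) := by
        gcongr
        exact integral_norm_add_rpow_le_of_isOptimalCurve hyp hδ hM hp ht₀ hv

end ValueFunction

theorem bound_on_optimal_curves_general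
    (T p M δ : ℝ) (hT : 0 < T) (hp : 1 < p) (hM : 0 < M) (hδ : 0 < δ)
    (N : ℕ)
    (a : EuclideanSpace ℝ (Fin N) → ℝ → ℝ)
    (f : EuclideanSpace ℝ (Fin N) → ℝ → EuclideanSpace ℝ (Fin N))
    (g : EuclideanSpace ℝ (Fin N) → ℝ)
    (hyp : StandardHyps T M δ a f g) :
    0 ≤ (2:ℝ) ^ (p - 1) * (M ^ (p + 1) * T + 2 * M) / δ + M ^ p * T ∧
    ∀ (x₀ : EuclideanSpace ℝ (Fin N)) (t₀ : ℝ), t₀ ∈ Ico 0 T →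
      ∀ v : ℝ → EuclideanSpace ℝ (Fin N), IsOptimalCurve T p a f g x₀ t₀ v →
        ∫ s in t₀..T, ‖v s‖ ^ p ≤
          (2:ℝ) ^ (p - 1) * (M ^ (p + 1) * T + 2 * M) / δ + M ^ p * T := by
  refine ⟨by positivity, fun x₀ t₀ ht₀ v hv => ?_⟩
  obtain ⟨-, -, -, haM, -, -, hδa⟩ := id hyp
  have hδM : δ ≤ M :=
    (hδa 0 0 ⟨le_rfl, hT.le⟩).trans ((le_abs_self _).trans (haM 0 0 ⟨le_rfl, hT.le⟩))
  have hMp : M ^ p * T ≤ M ^ p * T * M / δ := by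
    rw [mul_div_assoc]
    exact le_mul_of_one_le_right (by positivity) ((one_le_div hδ).2 hδM)
  calc ∫ s in t₀..T, ‖v s‖ ^ p ≤ 2 ^ (p - 1) * (2 * M / δ + M ^ p * T) :=
        integral_norm_rpow_le_of_isOptimalCurve hyp hδ hM hp.le ht₀ hv
    _ ≤ 2 ^ (p - 1) * (2 * M / δ + M ^ p * T * M / δ) := by gcongr
    _ = 2 ^ (p - 1) * (M ^ (p + 1) * T + 2 * M) / δ := by
        rw [Real.rpow_add_one hM.ne']
        ring
    _ ≤ _ := le_add_of_nonneg_right (by positivity)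

/-- Lemma `BoundSol`: any optimal curve `x̄` for `(x₀,t₀)` satisfies
`∫_{t₀}^T |x̄'(s)|^p ds ≤ K` with `K = 2^{p-1}(M^{p+1}T + 2M)/δ + M^p T`. -/
theorem bound_on_optimal_curves
    (T p M δ : ℝ) (hT : 0 < T) (hp : 1 < p) (hM : 0 < M) (hδ : 0 < δ)
    (N : ℕ) (hN : 1 ≤ N)
    (a : EuclideanSpace ℝ (Fin N) → ℝ → ℝ)
    (f : EuclideanSpace ℝ (Fin N) → ℝ → EuclideanSpace ℝ (Fin N))
    (g : EuclideanSpace ℝ (Fin N) → ℝ)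
    (hyp : StandardHyps T M δ a f g) :
    0 ≤ (2:ℝ) ^ (p - 1) * (M ^ (p + 1) * T + 2 * M) / δ + M ^ p * T ∧
    ∀ (x₀ : EuclideanSpace ℝ (Fin N)) (t₀ : ℝ), t₀ ∈ Ico 0 T →
      ∀ v : ℝ → EuclideanSpace ℝ (Fin N), IsOptimalCurve T p a f g x₀ t₀ v →
        ∫ s in t₀..T, ‖v s‖ ^ p ≤
          (2:ℝ) ^ (p - 1) * (M ^ (p + 1) * T + 2 * M) / δ + M ^ p * T :=
  bound_on_optimal_curves_general T p M δ hT hp hM hδ N a f g hyp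
end
end

section
/- There are constants A ≥ 1 and B ≥ 0 depending only on M, δ, p, T such that, for any x₀ ∈ ℝ^N, any t₀ ∈ [0,T), and any curve x̄ that is optimal for the initial condition (x₀, t₀), one has for every h ∈ (0, T−t₀]: (1/h) ∫_{t₀}^{t₀+h} |x̄'(s)|^p ds ≤ A ( (1/h) ∫_{t₀}^{t₀+h} |x̄'(s)| ds )^p + B. -/
open MeasureTheory Set intervalIntegral

noncomputable section

/-
Compare the optimal derivative `v` with the competitor that replaces `v` on `[t, t + h]` by its
mean `c = h⁻¹ ∫_t^{t+h} v` and keeps `v` afterwards. Both curves coincide from `t + h` on, so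
optimality bounds the running cost of `v` over `[t, t + h]` by that of the competitor, which is
at most `h M 2^{p-1} (M^p + |c|^p)`. Since `a ≥ δ` and `|f| ≤ M`, the running cost controls
`|v|^p` from above, and Jensen gives `|c| ≤ h⁻¹ ∫_t^{t+h} |v|`.
-/

lemma norm_add_rpow_le {E : Type*} [SeminormedAddCommGroup E] {p : ℝ} (hp : 1 ≤ p) (u w : E) :
    ‖u + w‖ ^ p ≤ 2 ^ (p - 1) * (‖u‖ ^ p + ‖w‖ ^ p) :=
  calc ‖u + w‖ ^ p ≤ (‖u‖ + ‖w‖) ^ p :=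
        Real.rpow_le_rpow (norm_nonneg _) (norm_add_le u w) (by linarith)
    _ ≤ 2 ^ (p - 1) * (‖u‖ ^ p + ‖w‖ ^ p) := by
        exact_mod_cast NNReal.rpow_add_le_mul_rpow_add_rpow ‖u‖₊ ‖w‖₊ hp

def averagedDeriv {E : Type*} [NormedAddCommGroup E] [NormedSpace ℝ E] (t h : ℝ) (v : ℝ → E) :
    ℝ → E :=
  (Iic (t + h)).piecewise (fun _ => h⁻¹ • ∫ r in t..t + h, v r) v

lemma averagedDeriv_of_le {E : Type*} [NormedAddCommGroup E] [NormedSpace ℝ E] {t h s : ℝ}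
    {v : ℝ → E} (hs : s ≤ t + h) : averagedDeriv t h v s = h⁻¹ • ∫ r in t..t + h, v r :=
  piecewise_eq_of_mem _ _ _ hs

lemma averagedDeriv_of_lt {E : Type*} [NormedAddCommGroup E] [NormedSpace ℝ E] {t h s : ℝ}
    {v : ℝ → E} (hs : t + h < s) : averagedDeriv t h v s = v s :=
  piecewise_eq_of_notMem _ _ _ (not_le.2 hs)

lemma integral_averagedDeriv {E : Type*} [NormedAddCommGroup E] [NormedSpace ℝ E] [CompleteSpace E]
    {t h : ℝ} (v : ℝ → E) (hh : 0 < h) :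
    ∫ s in t..t + h, averagedDeriv t h v s = ∫ s in t..t + h, v s := by
  rw [intervalIntegral.integral_congr (g := fun _ => h⁻¹ • ∫ r in t..t + h, v r) fun s hs =>
      averagedDeriv_of_le (hs.2.trans (max_le (by linarith) le_rfl)),
    intervalIntegral.integral_const, add_sub_cancel_left, smul_smul, mul_inv_cancel₀ hh.ne',
    one_smul]

lemma norm_average_le {E : Type*} [NormedAddCommGroup E] [NormedSpace ℝ E] {t h : ℝ}
    (u : ℝ → E) (hh : 0 ≤ h) :
    ‖h⁻¹ • ∫ s in t..t + h, u s‖ ≤ h⁻¹ * ∫ s in t..t + h, ‖u s‖ := by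
  rw [norm_smul, norm_inv, Real.norm_of_nonneg hh]
  gcongr
  exact intervalIntegral.norm_integral_le_integral_norm (by linarith)

section OptimalCurves

variable {N : ℕ} {T p M δ t h : ℝ} {a : EuclideanSpace ℝ (Fin N) → ℝ → ℝ}
  {f : EuclideanSpace ℝ (Fin N) → ℝ → EuclideanSpace ℝ (Fin N)}
  {g : EuclideanSpace ℝ (Fin N) → ℝ} {x : EuclideanSpace ℝ (Fin N)}
  {v w : ℝ → EuclideanSpace ℝ (Fin N)}

def runningCost (p : ℝ) (a : EuclideanSpace ℝ (Fin N) → ℝ → ℝ)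
    (f : EuclideanSpace ℝ (Fin N) → ℝ → EuclideanSpace ℝ (Fin N))
    (x : EuclideanSpace ℝ (Fin N)) (t : ℝ) (v : ℝ → EuclideanSpace ℝ (Fin N)) (s : ℝ) : ℝ :=
  a (curveOf x t v s) s * ‖f (curveOf x t v s) s + v s‖ ^ p

lemma costOf_eq_integral_runningCost_add :
    costOf T p a f g x t v = (∫ s in t..T, runningCost p a f x t v s) + g (curveOf x t v T) :=
  rfl

lemma continuousOn_curveOf_s2 (hv : IntegrableOn v (Icc t T)) :
    ContinuousOn (curveOf x t v) (Icc t T) := by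
  refine continuousOn_const.add ((intervalIntegral.continuousOn_primitive hv).congr ?_)
  intro s hs
  exact intervalIntegral.integral_of_le hs.1

lemma AdmissibleDeriv.integrableOn (hv : AdmissibleDeriv T p t v) (hp : 1 ≤ p) :
    IntegrableOn v (Icc t T) :=
  MemLp.integrable (ENNReal.one_le_ofReal.2 hp) hv

lemma AdmissibleDeriv.integrableOn_rpow_norm (hv : AdmissibleDeriv T p t v) (hp : 0 < p) :
    IntegrableOn (fun s => ‖v s‖ ^ p) (Icc t T) := by
  show Integrable _ _
  simpa [ENNReal.toReal_ofReal hp.le] using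
    hv.integrable_norm_rpow (ENNReal.ofReal_pos.2 hp).ne' ENNReal.ofReal_ne_top

lemma AdmissibleDeriv.averagedDeriv (hv : AdmissibleDeriv T p t v) :
    AdmissibleDeriv T p t (averagedDeriv t h v) :=
  MemLp.piecewise measurableSet_Iic (memLp_const _) (hv.restrict _)

lemma StandardHyps.norm_mul_rpow_norm_add_le (hyp : StandardHyps T M δ a f g) (hp : 1 ≤ p) {s : ℝ}
    (hs : s ∈ Icc 0 T) (y u : EuclideanSpace ℝ (Fin N)) :
    ‖a y s * ‖f y s + u‖ ^ p‖ ≤ M * (2 ^ (p - 1) * (M ^ p + ‖u‖ ^ p)) := by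
  obtain ⟨-, -, -, haM, hfM, -, -⟩ := hyp
  have hM : 0 ≤ M := (abs_nonneg _).trans (haM y s hs)
  have hfu : ‖f y s + u‖ ^ p ≤ 2 ^ (p - 1) * (M ^ p + ‖u‖ ^ p) :=
    (norm_add_rpow_le hp _ _).trans (by gcongr; exact hfM y s hs)
  rw [norm_mul, Real.norm_eq_abs, Real.norm_of_nonneg (by positivity)]
  exact mul_le_mul (haM y s hs) hfu (by positivity) hM

lemma StandardHyps.rpow_norm_le (hyp : StandardHyps T M δ a f g) (hδ : 0 < δ) (hp : 1 ≤ p)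
    {s : ℝ} (hs : s ∈ Icc 0 T) (y u : EuclideanSpace ℝ (Fin N)) :
    ‖u‖ ^ p ≤ 2 ^ (p - 1) * M ^ p + 2 ^ (p - 1) / δ * (a y s * ‖f y s + u‖ ^ p) := by
  obtain ⟨-, -, -, -, hfM, -, haδ⟩ := hyp
  have hδa : δ * ‖f y s + u‖ ^ p ≤ a y s * ‖f y s + u‖ ^ p := by
    gcongr; exact haδ y s hs
  calc ‖u‖ ^ p = ‖-f y s + (f y s + u)‖ ^ p := by rw [neg_add_cancel_left]
    _ ≤ 2 ^ (p - 1) * (‖-f y s‖ ^ p + ‖f y s + u‖ ^ p) := norm_add_rpow_le hp _ _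
    _ ≤ 2 ^ (p - 1) * (M ^ p + ‖f y s + u‖ ^ p) := by
        rw [norm_neg]; gcongr; exact hfM y s hs
    _ = 2 ^ (p - 1) * M ^ p + 2 ^ (p - 1) / δ * (δ * ‖f y s + u‖ ^ p) := by
        field_simp
    _ ≤ 2 ^ (p - 1) * M ^ p + 2 ^ (p - 1) / δ * (a y s * ‖f y s + u‖ ^ p) := by gcongr

lemma StandardHyps.integrableOn_runningCost (hyp : StandardHyps T M δ a f g) (hp : 1 ≤ p)
    (ht : 0 ≤ t) (hv : AdmissibleDeriv T p t v) :
    IntegrableOn (runningCost p a f x t v) (Icc t T) := by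
  have hsub : Icc t T ⊆ Icc 0 T := Icc_subset_Icc ht le_rfl
  have hcurve : ContinuousOn (fun s => (curveOf x t v s, s)) (Icc t T) :=
    (continuousOn_curveOf_s2 (hv.integrableOn hp)).prodMk continuousOn_id
  have hmaps : MapsTo (fun s => (curveOf x t v s, s)) (Icc t T) (univ ×ˢ Icc 0 T) :=
    fun s hs => ⟨mem_univ _, hsub hs⟩
  have ha : AEStronglyMeasurable (fun s => a (curveOf x t v s) s) (volume.restrict (Icc t T)) :=
    (hyp.1.comp hcurve hmaps).aestronglyMeasurable measurableSet_Icc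
  have hf : AEStronglyMeasurable (fun s => f (curveOf x t v s) s + v s)
      (volume.restrict (Icc t T)) :=
    ((hyp.2.1.comp hcurve hmaps).aestronglyMeasurable measurableSet_Icc).add
      hv.aestronglyMeasurable
  have hmeas : AEStronglyMeasurable (runningCost p a f x t v) (volume.restrict (Icc t T)) :=
    ha.mul (hf.norm.aemeasurable.pow_const p).aestronglyMeasurable
  have hbound : Integrable (fun s => M * (2 ^ (p - 1) * (M ^ p + ‖v s‖ ^ p)))
      (volume.restrict (Icc t T)) :=
    (((integrable_const _).add (hv.integrableOn_rpow_norm (by linarith))).const_mul _).const_mul M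
  refine hbound.mono' hmeas ((ae_restrict_iff' measurableSet_Icc).2 (.of_forall fun s hs => ?_))
  exact hyp.norm_mul_rpow_norm_add_le hp (hsub hs) _ _

lemma StandardHyps.neg_le_costOf (hyp : StandardHyps T M δ a f g) (hδ : 0 ≤ δ)
    (ht : t ∈ Icc 0 T) (v : ℝ → EuclideanSpace ℝ (Fin N)) :
    -M ≤ costOf T p a f g x t v := by
  obtain ⟨-, -, -, -, -, hgM, haδ⟩ := hyp
  have hint : 0 ≤ ∫ s in t..T, runningCost p a f x t v s :=
    intervalIntegral.integral_nonneg ht.2 fun s hs =>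
      mul_nonneg (hδ.trans (haδ _ _ ⟨ht.1.trans hs.1, hs.2⟩)) (by positivity)
  rw [costOf_eq_integral_runningCost_add]
  linarith [neg_le_of_abs_le (hgM (curveOf x t v T))]

lemma IsOptimalCurve.costOf_le (hv : IsOptimalCurve T p a f g x t v)
    (hyp : StandardHyps T M δ a f g) (hδ : 0 ≤ δ) (ht : t ∈ Icc 0 T)
    (hw : AdmissibleDeriv T p t w) :
    costOf T p a f g x t v ≤ costOf T p a f g x t w :=
  hv.2 ▸ csInf_le ⟨-M, by rintro _ ⟨u, -, rfl⟩; exact hyp.neg_le_costOf hδ ht u⟩ ⟨w, hw, rfl⟩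

lemma costOf_eq_integral_add (hF : IntegrableOn (runningCost p a f x t v) (Icc t T)) {τ : ℝ}
    (hτ : τ ∈ Icc t T) :
    costOf T p a f g x t v = (∫ s in t..τ, runningCost p a f x t v s) +
      ((∫ s in τ..T, runningCost p a f x t v s) + g (curveOf x t v T)) := by
  have htT : t ∈ Icc t T := left_mem_Icc.2 (hτ.1.trans hτ.2)
  have hTT : T ∈ Icc t T := right_mem_Icc.2 (hτ.1.trans hτ.2)
  rw [costOf_eq_integral_runningCost_add, ← add_assoc,
    intervalIntegral.integral_add_adjacent_intervals
      (hF.mono_set (uIcc_subset_Icc htT hτ)).intervalIntegrable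
      (hF.mono_set (uIcc_subset_Icc hτ hTT)).intervalIntegrable]

lemma IsOptimalCurve.integral_runningCost_le (hv : IsOptimalCurve T p a f g x t v)
    (hyp : StandardHyps T M δ a f g) (hδ : 0 ≤ δ) (hp : 1 ≤ p) (ht : 0 ≤ t)
    (hw : AdmissibleDeriv T p t w) {τ : ℝ} (hτ : τ ∈ Icc t T) (hwv : EqOn w v (Ioc τ T))
    (hcurve : EqOn (curveOf x t w) (curveOf x t v) (Icc τ T)) :
    ∫ s in t..τ, runningCost p a f x t v s ≤ ∫ s in t..τ, runningCost p a f x t w s := by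
  have htail : ∫ s in τ..T, runningCost p a f x t w s = ∫ s in τ..T, runningCost p a f x t v s := by
    rw [intervalIntegral.integral_of_le hτ.2, intervalIntegral.integral_of_le hτ.2]
    refine setIntegral_congr_fun measurableSet_Ioc fun s hs => ?_
    simp only [runningCost, hwv hs, hcurve (Ioc_subset_Icc_self hs)]
  have hcost := hv.costOf_le hyp hδ ⟨ht, hτ.1.trans hτ.2⟩ hw
  rw [costOf_eq_integral_add (hyp.integrableOn_runningCost hp ht hv.1) hτ,
    costOf_eq_integral_add (hyp.integrableOn_runningCost hp ht hw) hτ, htail,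
    hcurve (right_mem_Icc.2 hτ.2)] at hcost
  linarith

lemma curveOf_averagedDeriv (hv : AdmissibleDeriv T p t v) (hp : 1 ≤ p) (hh : 0 < h) {s : ℝ}
    (hs : s ∈ Icc (t + h) T) : curveOf x t (averagedDeriv t h v) s = curveOf x t v s := by
  have hsT : s ∈ Icc t T := ⟨by linarith [hs.1], hs.2⟩
  have hmid : t + h ∈ Icc t T := ⟨by linarith, hs.1.trans hs.2⟩
  have hsplit : ∀ u : ℝ → EuclideanSpace ℝ (Fin N), IntegrableOn u (Icc t T) →
      ∫ r in t..s, u r = (∫ r in t..t + h, u r) + ∫ r in t + h..s, u r := fun u hu =>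
    (intervalIntegral.integral_add_adjacent_intervals
      (hu.mono_set (uIcc_subset_Icc (left_mem_Icc.2 (hmid.1.trans hmid.2)) hmid)).intervalIntegrable
      (hu.mono_set (uIcc_subset_Icc hmid hsT)).intervalIntegrable).symm
  simp only [curveOf]
  rw [hsplit _ (hv.averagedDeriv.integrableOn hp), hsplit _ (hv.integrableOn hp),
    integral_averagedDeriv v hh, intervalIntegral.integral_of_le hs.1,
    intervalIntegral.integral_of_le hs.1,
    setIntegral_congr_fun measurableSet_Ioc fun r hr => averagedDeriv_of_lt hr.1]

lemma StandardHyps.integral_runningCost_averagedDeriv_le (hyp : StandardHyps T M δ a f g)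
    (hp : 1 ≤ p) (ht : 0 ≤ t) (hh : 0 < h) (hhT : t + h ≤ T) (hv : AdmissibleDeriv T p t v) :
    ∫ s in t..t + h, runningCost p a f x t (averagedDeriv t h v) s ≤
      h * (M * (2 ^ (p - 1) * (M ^ p + ‖h⁻¹ • ∫ s in t..t + h, v s‖ ^ p))) := by
  have hint : IntervalIntegrable (runningCost p a f x t (averagedDeriv t h v)) volume t (t + h) :=
    ((hyp.integrableOn_runningCost hp ht hv.averagedDeriv).mono_set
    (uIcc_subset_Icc ⟨le_rfl, by linarith⟩ ⟨by linarith, hhT⟩)).intervalIntegrable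
  calc _ ≤ ∫ _ in t..t + h, M * (2 ^ (p - 1) * (M ^ p + ‖h⁻¹ • ∫ s in t..t + h, v s‖ ^ p)) :=
        intervalIntegral.integral_mono_on (by linarith) hint intervalIntegrable_const
          fun s hs => by
            rw [runningCost, averagedDeriv_of_le hs.2]
            exact (Real.le_norm_self _).trans
              (hyp.norm_mul_rpow_norm_add_le hp ⟨ht.trans hs.1, hs.2.trans hhT⟩ _ _)
    _ = _ := by rw [intervalIntegral.integral_const, add_sub_cancel_left, smul_eq_mul]

lemma StandardHyps.integral_rpow_norm_le (hyp : StandardHyps T M δ a f g) (hδ : 0 < δ)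
    (hp : 1 ≤ p) (ht : 0 ≤ t) (hh : 0 ≤ h) (hhT : t + h ≤ T) (hv : AdmissibleDeriv T p t v) :
    ∫ s in t..t + h, ‖v s‖ ^ p ≤
      h * (2 ^ (p - 1) * M ^ p) + 2 ^ (p - 1) / δ * ∫ s in t..t + h, runningCost p a f x t v s := by
  have hsub : uIcc t (t + h) ⊆ Icc t T :=
    uIcc_subset_Icc ⟨le_rfl, by linarith⟩ ⟨by linarith, hhT⟩
  have hF : IntervalIntegrable (runningCost p a f x t v) volume t (t + h) :=
    ((hyp.integrableOn_runningCost hp ht hv).mono_set hsub).intervalIntegrable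
  have hV := ((hv.integrableOn_rpow_norm (by linarith)).mono_set hsub).intervalIntegrable
  calc _ ≤ ∫ s in t..t + h, (2 ^ (p - 1) * M ^ p + 2 ^ (p - 1) / δ * runningCost p a f x t v s) :=
        intervalIntegral.integral_mono_on (by linarith) hV
          (intervalIntegrable_const.add (hF.const_mul _)) fun s hs =>
            hyp.rpow_norm_le hδ hp ⟨ht.trans hs.1, hs.2.trans hhT⟩ _ _
    _ = _ := by
        rw [intervalIntegral.integral_add intervalIntegrable_const (hF.const_mul _),
          intervalIntegral.integral_const, intervalIntegral.integral_const_mul,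
          add_sub_cancel_left, smul_eq_mul]

theorem IsOptimalCurve.average_rpow_norm_le (hv : IsOptimalCurve T p a f g x t v)
    (hyp : StandardHyps T M δ a f g) (hδ : 0 < δ) (hp : 1 ≤ p) (ht : 0 ≤ t) (hh : 0 < h)
    (hhT : t + h ≤ T) :
    (1 / h) * ∫ s in t..t + h, ‖v s‖ ^ p ≤
      2 ^ (p - 1) * 2 ^ (p - 1) * M / δ * ((1 / h) * ∫ s in t..t + h, ‖v s‖) ^ p +
        (2 ^ (p - 1) * M ^ p + 2 ^ (p - 1) * 2 ^ (p - 1) * M * M ^ p / δ) := by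
  set K : ℝ := 2 ^ (p - 1)
  set c := h⁻¹ • ∫ s in t..t + h, v s
  have hM : 0 ≤ M := (abs_nonneg _).trans (hyp.2.2.2.1 x t ⟨ht, by linarith⟩)
  have hcomp := hv.integral_runningCost_le hyp hδ.le hp ht hv.1.averagedDeriv
    ⟨by linarith, hhT⟩ (fun s hs => averagedDeriv_of_lt hs.1)
    (fun s hs => curveOf_averagedDeriv hv.1 hp hh hs)
  have hup := hyp.integral_runningCost_averagedDeriv_le (x := x) hp ht hh hhT hv.1
  have hlow := hyp.integral_rpow_norm_le (x := x) hδ hp ht hh.le hhT hv.1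
  have hc : ‖c‖ ≤ (1 / h) * ∫ s in t..t + h, ‖v s‖ := one_div h ▸ norm_average_le v hh.le
  calc (1 / h) * ∫ s in t..t + h, ‖v s‖ ^ p
      ≤ (1 / h) * (h * (K * M ^ p) + K / δ * (h * (M * (K * (M ^ p + ‖c‖ ^ p))))) := by
        gcongr
        exact hlow.trans (by gcongr; exact hcomp.trans hup)
    _ = K * K * M / δ * ‖c‖ ^ p + (K * M ^ p + K * K * M * M ^ p / δ) := by
        field_simp
        ring
    _ ≤ _ := by gcongr

end OptimalCurves

theorem reverse_holder_bound_on_optimal_curves_general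
    (T p M δ : ℝ) (hp : 1 < p) (hM : 0 < M) (hδ : 0 < δ) :
    ∃ A ≥ (1:ℝ), ∃ B ≥ (0:ℝ),
      ∀ (N : ℕ), 1 ≤ N →
        ∀ (a : EuclideanSpace ℝ (Fin N) → ℝ → ℝ)
          (f : EuclideanSpace ℝ (Fin N) → ℝ → EuclideanSpace ℝ (Fin N))
          (g : EuclideanSpace ℝ (Fin N) → ℝ), StandardHyps T M δ a f g →
          ∀ (x₀ : EuclideanSpace ℝ (Fin N)) (t₀ : ℝ), t₀ ∈ Ico 0 T →
            ∀ v : ℝ → EuclideanSpace ℝ (Fin N), IsOptimalCurve T p a f g x₀ t₀ v →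
              ∀ h ∈ Ioc 0 (T - t₀),
                (1 / h) * ∫ s in t₀..t₀ + h, ‖v s‖ ^ p ≤
                  A * ((1 / h) * ∫ s in t₀..t₀ + h, ‖v s‖) ^ p + B := by
  set K : ℝ := 2 ^ (p - 1)
  refine ⟨1 + K * K * M / δ, le_add_of_nonneg_right (by positivity),
    K * M ^ p + K * K * M * M ^ p / δ, by positivity, ?_⟩
  intro N _ a f g hyp x₀ t₀ ht₀ v hv h hh
  have hR : 0 ≤ (1 / h) * ∫ s in t₀..t₀ + h, ‖v s‖ :=
    mul_nonneg (one_div_pos.2 hh.1).le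
      (intervalIntegral.integral_nonneg (by linarith [hh.1]) fun s _ => norm_nonneg _)
  refine (hv.average_rpow_norm_le hyp hδ hp.le ht₀.1 hh.1 (by linarith [hh.2])).trans ?_
  gcongr
  linarith

/-- Lemma `EstiOptiSol`: there are constants `A ≥ 1`, `B ≥ 0` depending only
on `M, δ, p, T` such that any optimal curve `x̄` for `(x₀,t₀)` satisfies, for all
`h ∈ (0, T-t₀]`, `(1/h)∫_{t₀}^{t₀+h} |x̄'|^p ≤ A ((1/h)∫_{t₀}^{t₀+h} |x̄'|)^p + B`. -/
theorem reverse_holder_bound_on_optimal_curves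
    (T p M δ : ℝ) (hT : 0 < T) (hp : 1 < p) (hM : 0 < M) (hδ : 0 < δ) :
    ∃ A ≥ (1:ℝ), ∃ B ≥ (0:ℝ),
      ∀ (N : ℕ), 1 ≤ N →
        ∀ (a : EuclideanSpace ℝ (Fin N) → ℝ → ℝ)
          (f : EuclideanSpace ℝ (Fin N) → ℝ → EuclideanSpace ℝ (Fin N))
          (g : EuclideanSpace ℝ (Fin N) → ℝ), StandardHyps T M δ a f g →
          ∀ (x₀ : EuclideanSpace ℝ (Fin N)) (t₀ : ℝ), t₀ ∈ Ico 0 T →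
            ∀ v : ℝ → EuclideanSpace ℝ (Fin N), IsOptimalCurve T p a f g x₀ t₀ v →
              ∀ h ∈ Ioc 0 (T - t₀),
                (1 / h) * ∫ s in t₀..t₀ + h, ‖v s‖ ^ p ≤
                  A * ((1 / h) * ∫ s in t₀..t₀ + h, ‖v s‖) ^ p + B :=
  reverse_holder_bound_on_optimal_curves_general T p M δ hp hM hδ
end
end

section
/- Let A > 1 and p > 1. Then there are constants θ = θ(A,p) > p and C = C(A,p) > 0 such that, for every α ∈ L^p(0,1) satisfying the reverse Hölder condition (1/h) ∫_0^h |α(s)|^p ds ≤ A ( (1/h) ∫_0^h |α(s)| ds )^p for all h ∈ (0,1], one has ∫_0^h |α(s)| ds ≤ C ‖α‖_{L^p(0,1)} h^{1−1/θ} for all h ∈ [0,1]. -/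
open MeasureTheory Set intervalIntegral

/-!
Write `Φ(h) = ∫₀ʰ f^p` for `f = |α|`. Splitting `(0, h)` at `δh` and applying Hölder on both
pieces, the reverse Hölder condition forces the tail `Φ(h) - Φ(δh)` to carry a fixed fraction
`(2^p A)⁻¹` of `Φ(h)` once `2^p A δ^(p-1) ≤ 1`. Iterating, `Φ` decays geometrically along
`δⁿ`, i.e. `Φ(h) ≲ h^γ Φ(1)` with `δ^γ = 1 - (2^p A)⁻¹`, and one more Hölder inequality gives
`∫₀ʰ f ≲ h^(1 - 1/p + γ/p) ‖f‖_p`, which beats the exponent `1 - 1/θ` for `θ = p (1 + γ)`.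
-/

theorem MeasureTheory.integral_le_measureReal_rpow_mul_integral_rpow {X : Type*}
    [MeasurableSpace X] {μ : Measure X} [IsFiniteMeasure μ] {p : ℝ} (hp : 1 < p) {f : X → ℝ}
    (hf_nonneg : 0 ≤ᵐ[μ] f) (hf : MemLp f (ENNReal.ofReal p) μ) :
    ∫ x, f x ∂μ ≤ μ.real univ ^ (1 - 1 / p) * (∫ x, f x ^ p ∂μ) ^ (1 / p) := by
  have hpq := Real.HolderConjugate.conjExponent hp
  have hholder := integral_mul_le_Lp_mul_Lq_of_nonneg hpq hf_nonneg
    (.of_forall fun _ => zero_le_one) hf (memLp_const 1)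
  rw [one_div p.conjExponent, ← hpq.one_sub_inv] at hholder
  simpa [mul_comm] using hholder

theorem intervalIntegral.integral_le_rpow_mul_integral_rpow {p : ℝ} (hp : 1 < p) {f : ℝ → ℝ}
    (hf_nonneg : ∀ s, 0 ≤ f s) {a b : ℝ} (hab : a ≤ b)
    (hf : MemLp f (ENNReal.ofReal p) (volume.restrict (Ioc a b))) :
    ∫ s in a..b, f s ≤ (b - a) ^ (1 - 1 / p) * (∫ s in a..b, f s ^ p) ^ (1 / p) := by
  have : IsFiniteMeasure (volume.restrict (Ioc a b)) :=
    isFiniteMeasure_restrict.2 measure_Ioc_lt_top.ne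
  simpa [integral_of_le hab, measureReal_restrict_apply_univ, Real.volume_real_Ioc_of_le hab]
    using integral_le_measureReal_rpow_mul_integral_rpow hp (.of_forall hf_nonneg) hf

theorem MonotoneOn.le_inv_mul_rpow_logb_mul {Φ : ℝ → ℝ} (hmono : MonotoneOn Φ (Ioc 0 1))
    {δ t : ℝ} (hδ0 : 0 < δ) (hδ1 : δ < 1) (ht0 : 0 < t) (ht1 : t ≤ 1) (hΦ1 : 0 ≤ Φ 1)
    (hdecay : ∀ h ∈ Ioc (0 : ℝ) 1, Φ (δ * h) ≤ t * Φ h) {h : ℝ} (hh : h ∈ Ioc (0 : ℝ) 1) :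
    Φ h ≤ t⁻¹ * h ^ Real.logb δ t * Φ 1 := by
  have hδpow (n : ℕ) : δ ^ n ∈ Ioc (0 : ℝ) 1 := ⟨pow_pos hδ0 n, pow_le_one₀ hδ0.le hδ1.le⟩
  have hgeom (n : ℕ) : Φ (δ ^ n) ≤ t ^ n * Φ 1 := by
    induction n with
    | zero => simp
    | succ n ih =>
      calc Φ (δ ^ (n + 1)) = Φ (δ * δ ^ n) := by rw [pow_succ']
        _ ≤ t * Φ (δ ^ n) := hdecay _ (hδpow n)
        _ ≤ t * (t ^ n * Φ 1) := by gcongr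
        _ = t ^ (n + 1) * Φ 1 := by ring
  obtain ⟨n, hlt, hle⟩ := exists_nat_pow_near_of_lt_one hh.1 hh.2 hδ0 hδ1
  have hstep : t ^ (n + 1) ≤ h ^ Real.logb δ t :=
    calc t ^ (n + 1) = (δ ^ (n + 1)) ^ Real.logb δ t := by
          rw [← Real.rpow_pow_comm hδ0.le, Real.rpow_logb hδ0 hδ1.ne ht0]
      _ ≤ h ^ Real.logb δ t :=
          Real.rpow_le_rpow (pow_pos hδ0 _).le hlt.le
            (Real.logb_nonneg_of_base_lt_one hδ0 hδ1 ht0 ht1)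
  calc Φ h ≤ Φ (δ ^ n) := hmono hh (hδpow n) hle
    _ ≤ t ^ n * Φ 1 := hgeom n
    _ = t⁻¹ * t ^ (n + 1) * Φ 1 := by field_simp; ring
    _ ≤ t⁻¹ * h ^ Real.logb δ t * Φ 1 := by gcongr

theorem Real.rpow_one_sub_one_div_mul_rpow_one_div_le {h Φ F A p : ℝ} (hh : 0 < h) (hΦ : 0 ≤ Φ)
    (hF : 0 ≤ F) (hA : 0 ≤ A) (hp : 0 < p) (hRH : 1 / h * Φ ≤ A * (1 / h * F) ^ p) :
    h ^ (1 - 1 / p) * Φ ^ (1 / p) ≤ A ^ (1 / p) * F := by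
  have hroot := Real.rpow_le_rpow (by positivity) hRH (by positivity : (0 : ℝ) ≤ 1 / p)
  rw [Real.mul_rpow (by positivity) hΦ, Real.mul_rpow hA (by positivity),
    ← Real.rpow_mul (by positivity), mul_one_div_cancel hp.ne', Real.rpow_one,
    one_div h, Real.inv_rpow hh.le] at hroot
  rw [Real.rpow_sub hh, Real.rpow_one, div_eq_mul_inv, mul_assoc]
  calc h * ((h ^ (1 / p))⁻¹ * Φ ^ (1 / p)) ≤ h * (A ^ (1 / p) * (h⁻¹ * F)) := by gcongr
    _ = A ^ (1 / p) * F := by field_simp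

section ReverseHolder

variable {f : ℝ → ℝ} {p A δ : ℝ}

theorem integral_rpow_nonneg (hf_nonneg : ∀ s, 0 ≤ f s) {a b : ℝ} (hab : a ≤ b) :
    0 ≤ ∫ s in a..b, f s ^ p :=
  integral_nonneg hab fun s _ => Real.rpow_nonneg (hf_nonneg s) p

theorem intervalIntegrable_of_memLp_Ioc (hp : 1 ≤ p)
    (hf : MemLp f (ENNReal.ofReal p) (volume.restrict (Ioc 0 1))) {a b : ℝ} (ha : 0 ≤ a)
    (hab : a ≤ b) (hb : b ≤ 1) : IntervalIntegrable f volume a b := by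
  have : IntervalIntegrable f volume 0 1 := by
    rw [intervalIntegrable_iff_integrableOn_Ioc_of_le zero_le_one]
    exact hf.integrable (ENNReal.one_le_ofReal.2 hp)
  exact this.mono_set (uIcc_subset_uIcc (by simp [ha, hab.trans hb]) (by simp [hb, ha.trans hab]))

theorem intervalIntegrable_rpow_of_memLp_Ioc (hp : 0 < p) (hf_nonneg : ∀ s, 0 ≤ f s)
    (hf : MemLp f (ENNReal.ofReal p) (volume.restrict (Ioc 0 1))) {a b : ℝ} (ha : 0 ≤ a)
    (hab : a ≤ b) (hb : b ≤ 1) : IntervalIntegrable (fun s => f s ^ p) volume a b := by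
  have : IntervalIntegrable (fun s => f s ^ p) volume 0 1 := by
    rw [intervalIntegrable_iff_integrableOn_Ioc_of_le zero_le_one, IntegrableOn]
    simpa [Real.norm_of_nonneg (hf_nonneg _), ENNReal.toReal_ofReal hp.le]
      using hf.integrable_norm_rpow (by simpa using hp) ENNReal.ofReal_ne_top
  exact this.mono_set (uIcc_subset_uIcc (by simp [ha, hab.trans hb]) (by simp [hb, ha.trans hab]))

theorem integral_le_rpow_mul_integral_rpow_of_memLp_Ioc (hp : 1 < p) (hf_nonneg : ∀ s, 0 ≤ f s)
    (hf : MemLp f (ENNReal.ofReal p) (volume.restrict (Ioc 0 1))) {a b : ℝ} (ha : 0 ≤ a)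
    (hab : a ≤ b) (hb : b ≤ 1) :
    ∫ s in a..b, f s ≤ (b - a) ^ (1 - 1 / p) * (∫ s in a..b, f s ^ p) ^ (1 / p) :=
  integral_le_rpow_mul_integral_rpow hp hf_nonneg hab
    (hf.mono_measure (Measure.restrict_mono (Ioc_subset_Ioc ha hb) le_rfl))

theorem integral_rpow_add_integral_rpow_of_memLp_Ioc (hp : 0 < p) (hf_nonneg : ∀ s, 0 ≤ f s)
    (hf : MemLp f (ENNReal.ofReal p) (volume.restrict (Ioc 0 1))) {c h : ℝ} (hc : 0 ≤ c)
    (hch : c ≤ h) (hh : h ≤ 1) :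
    (∫ s in (0 : ℝ)..c, f s ^ p) + ∫ s in c..h, f s ^ p = ∫ s in (0 : ℝ)..h, f s ^ p :=
  integral_add_adjacent_intervals
    (intervalIntegrable_rpow_of_memLp_Ioc hp hf_nonneg hf le_rfl hc (hch.trans hh))
    (intervalIntegrable_rpow_of_memLp_Ioc hp hf_nonneg hf hc hch hh)

theorem integral_le_rpow_mul_add_of_memLp_Ioc (hp : 1 < p) (hδ0 : 0 ≤ δ) (hδ1 : δ ≤ 1)
    (hf_nonneg : ∀ s, 0 ≤ f s) (hf : MemLp f (ENNReal.ofReal p) (volume.restrict (Ioc 0 1)))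
    {h : ℝ} (hh : h ∈ Ioc (0 : ℝ) 1) :
    ∫ s in (0 : ℝ)..h, f s ≤ h ^ (1 - 1 / p) *
      (δ ^ (1 - 1 / p) * (∫ s in (0 : ℝ)..h, f s ^ p) ^ (1 / p) +
        (∫ s in (δ * h)..h, f s ^ p) ^ (1 / p)) := by
  obtain ⟨hh0, hh1⟩ := hh
  have hexp : 0 ≤ 1 - 1 / p := sub_nonneg.2 ((div_le_one (hp.trans' one_pos)).2 hp.le)
  have hδh0 : 0 ≤ δ * h := by positivity
  have hδh : δ * h ≤ h := mul_le_of_le_one_left hh0.le hδ1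
  have hhead : ∫ s in (0 : ℝ)..(δ * h), f s ≤
      δ ^ (1 - 1 / p) * h ^ (1 - 1 / p) * (∫ s in (0 : ℝ)..h, f s ^ p) ^ (1 / p) := by
    calc ∫ s in (0 : ℝ)..(δ * h), f s
        ≤ (δ * h) ^ (1 - 1 / p) * (∫ s in (0 : ℝ)..(δ * h), f s ^ p) ^ (1 / p) := by
          simpa using integral_le_rpow_mul_integral_rpow_of_memLp_Ioc hp hf_nonneg hf le_rfl
            hδh0 (hδh.trans hh1)
      _ ≤ δ ^ (1 - 1 / p) * h ^ (1 - 1 / p) * (∫ s in (0 : ℝ)..h, f s ^ p) ^ (1 / p) := by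
          rw [Real.mul_rpow hδ0 hh0.le,
            ← integral_rpow_add_integral_rpow_of_memLp_Ioc (hp.trans' one_pos) hf_nonneg hf hδh0
              hδh hh1]
          gcongr
          · exact integral_rpow_nonneg hf_nonneg hδh0
          · exact le_add_of_nonneg_right (integral_rpow_nonneg hf_nonneg hδh)
  have htail :
      ∫ s in (δ * h)..h, f s ≤ h ^ (1 - 1 / p) * (∫ s in (δ * h)..h, f s ^ p) ^ (1 / p) :=
    calc ∫ s in (δ * h)..h, f s
        ≤ (h - δ * h) ^ (1 - 1 / p) * (∫ s in (δ * h)..h, f s ^ p) ^ (1 / p) :=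
          integral_le_rpow_mul_integral_rpow_of_memLp_Ioc hp hf_nonneg hf hδh0 hδh hh1
      _ ≤ h ^ (1 - 1 / p) * (∫ s in (δ * h)..h, f s ^ p) ^ (1 / p) := by
          gcongr
          · exact Real.rpow_nonneg (integral_rpow_nonneg hf_nonneg hδh) _
          · linarith
  rw [← integral_add_adjacent_intervals
    (intervalIntegrable_of_memLp_Ioc hp.le hf le_rfl hδh0 (hδh.trans hh1))
    (intervalIntegrable_of_memLp_Ioc hp.le hf hδh0 hδh hh1)]
  linarith

theorem integral_rpow_le_mul_integral_rpow_of_reverse_holder (hp : 1 < p) (hA : 0 ≤ A)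
    (hδ0 : 0 ≤ δ) (hδ1 : δ ≤ 1) (hδA : 2 ^ p * A * δ ^ (p - 1) ≤ 1) (hf_nonneg : ∀ s, 0 ≤ f s)
    (hf : MemLp f (ENNReal.ofReal p) (volume.restrict (Ioc 0 1)))
    (hRH : ∀ h ∈ Ioc (0 : ℝ) 1,
      1 / h * ∫ s in (0 : ℝ)..h, f s ^ p ≤ A * (1 / h * ∫ s in (0 : ℝ)..h, f s) ^ p)
    {h : ℝ} (hh : h ∈ Ioc (0 : ℝ) 1) :
    ∫ s in (0 : ℝ)..h, f s ^ p ≤ 2 ^ p * A * ∫ s in (δ * h)..h, f s ^ p := by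
  have hp0 : 0 < p := hp.trans' one_pos
  have hh0 : 0 < h := hh.1
  set Φ := ∫ s in (0 : ℝ)..h, f s ^ p
  set T := ∫ s in (δ * h)..h, f s ^ p
  have hΦ : 0 ≤ Φ := integral_rpow_nonneg hf_nonneg hh0.le
  have hT : 0 ≤ T := integral_rpow_nonneg hf_nonneg (mul_le_of_le_one_left hh0.le hδ1)
  have hscale : A ^ (1 / p) * δ ^ (1 - 1 / p) ≤ 1 / 2 := by
    have hroot := Real.rpow_le_rpow (by positivity) hδA (by positivity : (0 : ℝ) ≤ 1 / p)
    rw [Real.one_rpow, Real.mul_rpow (by positivity) (by positivity),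
      Real.mul_rpow (by positivity) hA, ← Real.rpow_mul (by norm_num), ← Real.rpow_mul hδ0,
      mul_one_div_cancel hp0.ne', Real.rpow_one, show (p - 1) * (1 / p) = 1 - 1 / p by field_simp]
      at hroot
    linarith
  have hroot : Φ ^ (1 / p) ≤ 2 * A ^ (1 / p) * T ^ (1 / p) := by
    have hRH' := Real.rpow_one_sub_one_div_mul_rpow_one_div_le hh0 hΦ
      (integral_nonneg hh0.le fun s _ => hf_nonneg s) hA hp0 (hRH h hh)
    have hsplit := integral_le_rpow_mul_add_of_memLp_Ioc hp hδ0 hδ1 hf_nonneg hf hh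
    refine le_of_mul_le_mul_left ?_ (Real.rpow_pos_of_pos hh0 (1 - 1 / p))
    -- with `u = h ^ (1 - 1 / p)`, `hRH'` and `hsplit` give
    -- `u Φ^(1/p) ≤ A^(1/p) δ^(1-1/p) u Φ^(1/p) + A^(1/p) u T^(1/p)`; `hscale` halves the first term
    nlinarith [mul_le_mul_of_nonneg_left hsplit (by positivity : (0 : ℝ) ≤ A ^ (1 / p)),
      mul_le_mul_of_nonneg_right hscale (by positivity : 0 ≤ h ^ (1 - 1 / p) * Φ ^ (1 / p))]
  calc Φ = (Φ ^ (1 / p)) ^ p := by rw [one_div, Real.rpow_inv_rpow hΦ hp0.ne']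
    _ ≤ (2 * A ^ (1 / p) * T ^ (1 / p)) ^ p := by gcongr
    _ = 2 ^ p * A * T := by
        rw [Real.mul_rpow (by positivity) (by positivity),
          Real.mul_rpow (by norm_num) (by positivity), one_div, Real.rpow_inv_rpow hA hp0.ne',
          Real.rpow_inv_rpow hT hp0.ne']

theorem integral_rpow_mul_le_of_reverse_holder (hp : 1 < p) (hA : 0 < A) (hδ0 : 0 ≤ δ)
    (hδ1 : δ ≤ 1) (hδA : 2 ^ p * A * δ ^ (p - 1) ≤ 1) (hf_nonneg : ∀ s, 0 ≤ f s)
    (hf : MemLp f (ENNReal.ofReal p) (volume.restrict (Ioc 0 1)))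
    (hRH : ∀ h ∈ Ioc (0 : ℝ) 1,
      1 / h * ∫ s in (0 : ℝ)..h, f s ^ p ≤ A * (1 / h * ∫ s in (0 : ℝ)..h, f s) ^ p)
    {h : ℝ} (hh : h ∈ Ioc (0 : ℝ) 1) :
    ∫ s in (0 : ℝ)..(δ * h), f s ^ p ≤ (1 - (2 ^ p * A)⁻¹) * ∫ s in (0 : ℝ)..h, f s ^ p := by
  have htail : (2 ^ p * A)⁻¹ * ∫ s in (0 : ℝ)..h, f s ^ p ≤ ∫ s in (δ * h)..h, f s ^ p := by
    rw [inv_mul_le_iff₀ (by positivity)]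
    exact integral_rpow_le_mul_integral_rpow_of_reverse_holder hp hA.le hδ0 hδ1 hδA
      hf_nonneg hf hRH hh
  rw [← integral_rpow_add_integral_rpow_of_memLp_Ioc (hp.trans' one_pos) hf_nonneg hf
    (mul_nonneg hδ0 hh.1.le) (mul_le_of_le_one_left hh.1.le hδ1) hh.2] at htail ⊢
  linarith

theorem integral_rpow_le_rpow_logb_mul_of_reverse_holder (hp : 1 < p) (hA : 1 ≤ A)
    (hδ0 : 0 < δ) (hδ1 : δ < 1) (hδA : 2 ^ p * A * δ ^ (p - 1) ≤ 1) (hf_nonneg : ∀ s, 0 ≤ f s)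
    (hf : MemLp f (ENNReal.ofReal p) (volume.restrict (Ioc 0 1)))
    (hRH : ∀ h ∈ Ioc (0 : ℝ) 1,
      1 / h * ∫ s in (0 : ℝ)..h, f s ^ p ≤ A * (1 / h * ∫ s in (0 : ℝ)..h, f s) ^ p)
    {h : ℝ} (hh : h ∈ Ioc (0 : ℝ) 1) :
    ∫ s in (0 : ℝ)..h, f s ^ p ≤ (1 - (2 ^ p * A)⁻¹)⁻¹ *
      h ^ Real.logb δ (1 - (2 ^ p * A)⁻¹) * ∫ s in (0 : ℝ)..1, f s ^ p := by
  have hκ : 1 < 2 ^ p * A :=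
    one_lt_mul_of_lt_of_le (Real.one_lt_rpow one_lt_two (hp.trans' one_pos)) hA
  have hmono : MonotoneOn (fun x => ∫ s in (0 : ℝ)..x, f s ^ p) (Ioc 0 1) :=
    fun a ha b hb hab => integral_mono_interval le_rfl ha.1.le hab
      (ae_of_all _ fun s => Real.rpow_nonneg (hf_nonneg s) p)
      (intervalIntegrable_rpow_of_memLp_Ioc (hp.trans' one_pos) hf_nonneg hf le_rfl hb.1.le hb.2)
  exact hmono.le_inv_mul_rpow_logb_mul hδ0 hδ1 (sub_pos.2 (inv_lt_one_of_one_lt₀ hκ))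
    (sub_le_self _ (by positivity)) (integral_rpow_nonneg hf_nonneg zero_le_one)
    (fun x hx => integral_rpow_mul_le_of_reverse_holder hp (by positivity) hδ0.le hδ1.le hδA
      hf_nonneg hf hRH hx) hh

theorem integral_le_of_reverse_holder (hp : 1 < p) (hA : 1 ≤ A) (hδ0 : 0 < δ) (hδ1 : δ < 1)
    (hδA : 2 ^ p * A * δ ^ (p - 1) ≤ 1) (hf_nonneg : ∀ s, 0 ≤ f s)
    (hf : MemLp f (ENNReal.ofReal p) (volume.restrict (Ioc 0 1)))
    (hRH : ∀ h ∈ Ioc (0 : ℝ) 1,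
      1 / h * ∫ s in (0 : ℝ)..h, f s ^ p ≤ A * (1 / h * ∫ s in (0 : ℝ)..h, f s) ^ p)
    {h : ℝ} (hh : h ∈ Icc (0 : ℝ) 1) :
    ∫ s in (0 : ℝ)..h, f s ≤ (1 - (2 ^ p * A)⁻¹)⁻¹ ^ (1 / p) *
      (∫ s in (0 : ℝ)..1, f s ^ p) ^ (1 / p) *
        h ^ (1 - 1 / (p * (1 + Real.logb δ (1 - (2 ^ p * A)⁻¹)))) := by
  have hp0 : 0 < p := hp.trans' one_pos
  have hκ : 1 < 2 ^ p * A := one_lt_mul_of_lt_of_le (Real.one_lt_rpow one_lt_two hp0) hA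
  set t := 1 - (2 ^ p * A)⁻¹
  have ht0 : 0 < t := sub_pos.2 (inv_lt_one_of_one_lt₀ hκ)
  set γ := Real.logb δ t
  have hγ : 0 ≤ γ := Real.logb_nonneg_of_base_lt_one hδ0 hδ1 ht0 (sub_le_self _ (by positivity))
  rcases hh.1.eq_or_lt with rfl | hh0
  · have hθ : 1 / (p * (1 + γ)) < 1 := (div_lt_one (by positivity)).2 (by nlinarith)
    rw [integral_same, Real.zero_rpow (sub_pos.2 hθ).ne', mul_zero]
  have hΦ1 := integral_rpow_nonneg (p := p) hf_nonneg zero_le_one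
  have hexp : 1 - 1 / (p * (1 + γ)) ≤ 1 - 1 / p + γ / p := by
    have : 1 / p - γ / p - 1 / (p * (1 + γ)) = -(γ ^ 2 / (p * (1 + γ))) := by field_simp; ring
    nlinarith [div_nonneg (sq_nonneg γ) (by positivity : (0 : ℝ) ≤ p * (1 + γ))]
  calc ∫ s in (0 : ℝ)..h, f s
      ≤ (h - 0) ^ (1 - 1 / p) * (∫ s in (0 : ℝ)..h, f s ^ p) ^ (1 / p) :=
        integral_le_rpow_mul_integral_rpow_of_memLp_Ioc hp hf_nonneg hf le_rfl hh0.le hh.2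
    _ ≤ h ^ (1 - 1 / p) * (t⁻¹ * h ^ γ * ∫ s in (0 : ℝ)..1, f s ^ p) ^ (1 / p) := by
        rw [sub_zero]
        gcongr
        · exact integral_rpow_nonneg hf_nonneg hh0.le
        · exact integral_rpow_le_rpow_logb_mul_of_reverse_holder hp hA hδ0 hδ1 hδA hf_nonneg hf
            hRH ⟨hh0, hh.2⟩
    _ = t⁻¹ ^ (1 / p) * (∫ s in (0 : ℝ)..1, f s ^ p) ^ (1 / p) * h ^ (1 - 1 / p + γ / p) := by
        rw [Real.mul_rpow (by positivity) hΦ1, Real.mul_rpow (by positivity) (by positivity),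
          ← Real.rpow_mul hh0.le, Real.rpow_add hh0, mul_one_div]
        ring
    _ ≤ t⁻¹ ^ (1 / p) * (∫ s in (0 : ℝ)..1, f s ^ p) ^ (1 / p) * h ^ (1 - 1 / (p * (1 + γ))) :=
        mul_le_mul_of_nonneg_left (Real.rpow_le_rpow_of_exponent_ge hh0 hh.2 hexp) (by positivity)

end ReverseHolder

/-- Lemma `RevHol`, reverse Hölder inequality: for `A > 1` and `p > 1` there
exist `θ = θ(A,p) > p` and `C = C(A,p) > 0` such that every `α ∈ L^p(0,1)` with
`(1/h)∫_0^h |α|^p ≤ A((1/h)∫_0^h |α|)^p` for all `h ∈ (0,1]` satisfies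
`∫_0^h |α| ≤ C ‖α‖_p h^{1-1/θ}` for all `h ∈ [0,1]`. -/
theorem reverse_holder_inequality (A p : ℝ) (hA : 1 < A) (hp : 1 < p) :
    ∃ θ > p, ∃ C > (0:ℝ), ∀ α : ℝ → ℝ,
      MemLp α (ENNReal.ofReal p) (volume.restrict (Ioo (0:ℝ) 1)) →
      (∀ h ∈ Ioc (0:ℝ) 1,
        (1 / h) * ∫ s in (0:ℝ)..h, |α s| ^ p ≤
          A * ((1 / h) * ∫ s in (0:ℝ)..h, |α s|) ^ p) →
      ∀ h ∈ Icc (0:ℝ) 1,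
        ∫ s in (0:ℝ)..h, |α s| ≤
          C * (∫ s in (0:ℝ)..1, |α s| ^ p) ^ (1 / p) * h ^ (1 - 1 / θ) := by
  have hp0 : 0 < p := hp.trans' one_pos
  have hκ : 1 < 2 ^ p * A := one_lt_mul_of_lt_of_le (Real.one_lt_rpow one_lt_two hp0) hA.le
  set δ := (2 ^ p * A) ^ (-(p - 1)⁻¹)
  have hδ0 : 0 < δ := by positivity
  have hδ1 : δ < 1 :=
    Real.rpow_lt_one_of_one_lt_of_neg hκ (neg_neg_of_pos (inv_pos.2 (sub_pos.2 hp)))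
  have hδA : 2 ^ p * A * δ ^ (p - 1) ≤ 1 := by
    rw [← Real.rpow_mul (by positivity), neg_mul, inv_mul_cancel₀ (sub_pos.2 hp).ne',
      Real.rpow_neg_one, mul_inv_cancel₀ (by positivity)]
  set t := 1 - (2 ^ p * A)⁻¹
  have ht0 : 0 < t := sub_pos.2 (inv_lt_one_of_one_lt₀ hκ)
  have hγ : 0 < Real.logb δ t :=
    Real.logb_pos_of_base_lt_one hδ0 hδ1 ht0 (sub_lt_self _ (by positivity))
  refine ⟨p * (1 + Real.logb δ t), by nlinarith, t⁻¹ ^ (1 / p), by positivity,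
    fun α hα hRH h hh => ?_⟩
  have hα' : MemLp (fun s => |α s|) (ENNReal.ofReal p) (volume.restrict (Ioc 0 1)) := by
    rw [← Measure.restrict_congr_set Ioo_ae_eq_Ioc]
    simpa [Real.norm_eq_abs] using hα.norm
  exact integral_le_of_reverse_holder hp hA.le hδ0 hδ1 hδA (fun s => abs_nonneg _) hα' hRH hh
end

section
/- Let A > 1 and p > 1, and consider the function φ(s) = s^p − A(1 − p + p s) on [0,∞). Then φ has exactly two roots; the smallest root γ belongs to the open interval (1 − 1/p, A^{1/(p−1)}), the other root is larger than A^{1/(p−1)}, and moreover for every s ≥ 0, φ(s) ≤ 0 implies s ≥ γ. -/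
/-!
`φ` is strictly convex on `[0, ∞)`, so it has at most two zeros there, is negative strictly between
them and positive outside. With `s₀ = A ^ (1 / (p - 1))` and `M = (A p) ^ (1 / (p - 1))` one has
`s ^ p = A s` at `s₀` and `s ^ p = A p s` at `M`, which gives `φ s₀ = A (p - 1) (1 - s₀) < 0` and
`φ M = A (p - 1) > 0`; also `φ (1 - 1/p) = (1 - 1/p) ^ p > 0`. The intermediate value theorem
then places one zero in `(1 - 1/p, s₀)` and one in `(s₀, M)`.
-/

open Real Set

namespace StrictConvexOn

variable {S : Set ℝ} {f : ℝ → ℝ} {c : ℝ}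

theorem apply_lt_of_mem_Ioo (hf : StrictConvexOn ℝ S f) {x y z : ℝ} (hx : x ∈ S) (hz : z ∈ S)
    (hy : y ∈ Ioo x z) (hfx : f x ≤ c) (hfz : f z ≤ c) : f y < c := by
  have hxz : x < z := hy.1.trans hy.2
  have hy' : y ∈ openSegment ℝ x z := by rwa [openSegment_eq_Ioo hxz]
  exact (hf.lt_on_openSegment hx hz hxz.ne hy').trans_le (max_le hfx hfz)

theorem le_of_apply_le (hf : StrictConvexOn ℝ S f) {a b s : ℝ} (hb : b ∈ S)
    (hab : a < b) (hfa : f a = c) (hfb : f b ≤ c) (hs : s ∈ S) (hfs : f s ≤ c) : a ≤ s := by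
  by_contra! hsa
  exact (hf.apply_lt_of_mem_Ioo hs hb ⟨hsa, hab⟩ hfs hfb).ne hfa

theorem ge_of_apply_le (hf : StrictConvexOn ℝ S f) {a b s : ℝ} (ha : a ∈ S)
    (hab : a < b) (hfa : f a ≤ c) (hfb : f b = c) (hs : s ∈ S) (hfs : f s ≤ c) : s ≤ b := by
  by_contra! hbs
  exact (hf.apply_lt_of_mem_Ioo ha hs ⟨hab, hbs⟩ hfa hfs).ne hfb

theorem eq_or_eq_of_apply_eq (hf : StrictConvexOn ℝ S f) {a b s : ℝ} (ha : a ∈ S) (hb : b ∈ S)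
    (hab : a < b) (hfa : f a = c) (hfb : f b = c) (hs : s ∈ S) (hfs : f s = c) :
    s = a ∨ s = b := by
  by_contra! hne
  have has : a < s := (hf.le_of_apply_le hb hab hfa hfb.le hs hfs.le).lt_of_ne' hne.1
  have hsb : s < b := (hf.ge_of_apply_le ha hab hfa.le hfb hs hfs.le).lt_of_ne hne.2
  exact (hf.apply_lt_of_mem_Ioo ha hb ⟨has, hsb⟩ hfa.le hfb.le).ne hfs

end StrictConvexOn

theorem rpow_one_div_sub_one_rpow {t p : ℝ} (ht : 0 < t) (hp : p ≠ 1) :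
    (t ^ (1 / (p - 1))) ^ p = t * t ^ (1 / (p - 1)) := by
  have hexp : 1 / (p - 1) * p = 1 + 1 / (p - 1) := by
    field_simp [sub_ne_zero.2 hp]
    ring
  rw [← rpow_mul ht.le, hexp, rpow_add ht, rpow_one]

noncomputable def phi (A p s : ℝ) : ℝ := s ^ p - A * (1 - p + p * s)

section phi

variable {A p : ℝ}

theorem continuous_phi (hp : 0 ≤ p) : Continuous (phi A p) :=
  (continuous_rpow_const hp).sub (by fun_prop)

theorem strictConvexOn_phi (hp : 1 < p) : StrictConvexOn ℝ (Ici 0) (phi A p) := by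
  have haffine : ConcaveOn ℝ (Ici 0) fun s : ℝ => A * (1 - p + p * s) := by
    refine ⟨convex_Ici 0, fun x _ y _ a b _ _ hab => ?_⟩
    simp only [smul_eq_mul]
    linear_combination (A * (1 - p)) * hab
  exact (strictConvexOn_rpow hp).sub_concaveOn haffine

theorem phi_rpow_one_div_sub_one {t : ℝ} (ht : 0 < t) (hp : p ≠ 1) :
    phi A p (t ^ (1 / (p - 1))) = (t - A * p) * t ^ (1 / (p - 1)) + A * (p - 1) := by
  rw [phi, rpow_one_div_sub_one_rpow ht hp]
  ring

theorem phi_one_sub_inv_pos (hp : 1 < p) : 0 < phi A p (1 - 1 / p) := by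
  have hp0 : p ≠ 0 := by positivity
  have hcancel : 1 - p + p * (1 - 1 / p) = 0 := by
    field_simp
    ring
  have hq : 0 < 1 - 1 / p := sub_pos.2 ((div_lt_one (by positivity)).2 hp)
  rw [phi, hcancel, mul_zero, sub_zero]
  exact rpow_pos_of_pos hq p

end phi

/-- for `A > 1`, `p > 1`, the function `φ(s) = s^p - A(1-p+ps)` on `[0,∞)`
has exactly two roots; the smallest root `γ` lies in `(1-1/p, A^{1/(p-1)})`, the other root is
larger than `A^{1/(p-1)}`, and `φ(s) ≤ 0` implies `s ≥ γ` for `s ≥ 0`. -/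
theorem roots_of_phi (A p : ℝ) (hA : 1 < A) (hp : 1 < p) :
    ∃ γ γ' : ℝ, γ < γ' ∧
      γ ^ p - A * (1 - p + p * γ) = 0 ∧
      γ' ^ p - A * (1 - p + p * γ') = 0 ∧
      (∀ s : ℝ, 0 ≤ s → s ^ p - A * (1 - p + p * s) = 0 → s = γ ∨ s = γ') ∧
      1 - 1 / p < γ ∧ γ < A ^ (1 / (p - 1)) ∧ A ^ (1 / (p - 1)) < γ' ∧
      (∀ s : ℝ, 0 ≤ s → s ^ p - A * (1 - p + p * s) ≤ 0 → γ ≤ s) := by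
  set s₀ := A ^ (1 / (p - 1))
  set M := (A * p) ^ (1 / (p - 1))
  have hexp : 0 < 1 / (p - 1) := by
    rw [one_div_pos, sub_pos]
    exact hp
  have hs₀ : 1 < s₀ := one_lt_rpow hA hexp
  have hs₀M : s₀ < M := rpow_lt_rpow (by positivity) (by nlinarith) hexp
  have hq0 : 0 < 1 - 1 / p := sub_pos.2 ((div_lt_one (by positivity)).2 hp)
  have hq : 1 - 1 / p < s₀ := (sub_lt_self 1 (by positivity)).trans hs₀
  have hφs₀ : phi A p s₀ < 0 := by
    rw [phi_rpow_one_div_sub_one (by positivity) hp.ne']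
    nlinarith [mul_pos (sub_pos.2 hA) (sub_pos.2 hp)]
  have hφM : 0 < phi A p M := by
    rw [phi_rpow_one_div_sub_one (by positivity) hp.ne', sub_self, zero_mul, zero_add]
    exact mul_pos (by positivity) (sub_pos.2 hp)
  have hcont : Continuous (phi A p) := continuous_phi (by positivity)
  obtain ⟨γ, ⟨hqγ, hγs₀⟩, hγ⟩ :=
    intermediate_value_Ioo' hq.le hcont.continuousOn ⟨hφs₀, phi_one_sub_inv_pos hp⟩
  obtain ⟨γ', ⟨hs₀γ', -⟩, hγ'⟩ := intermediate_value_Ioo hs₀M.le hcont.continuousOn ⟨hφs₀, hφM⟩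
  have hconv : StrictConvexOn ℝ (Ici 0) (phi A p) := strictConvexOn_phi hp
  have hγ0 : γ ∈ Ici (0 : ℝ) := (hq0.trans hqγ).le
  have hs₀0 : s₀ ∈ Ici (0 : ℝ) := (zero_lt_one.trans hs₀).le
  have hγ'0 : γ' ∈ Ici (0 : ℝ) := (hs₀0.trans_lt hs₀γ').le
  refine ⟨γ, γ', hγs₀.trans hs₀γ', hγ, hγ', fun s hs hφs => ?_, hqγ, hγs₀, hs₀γ', fun s hs hφs => ?_⟩
  · exact hconv.eq_or_eq_of_apply_eq hγ0 hγ'0 (hγs₀.trans hs₀γ') hγ hγ' hs hφs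
  · exact hconv.le_of_apply_le hs₀0 hγs₀ hγ hφs₀.le hs hφs
end

section
/- Let A > 1 and p > 1, and let 𝓔 = { α ∈ L^p(0,1) : α ≥ 0 a.e., ‖α‖_{L^p} ≤ 1, and (1/h) ∫_0^h α(s)^p ds ≤ A ( (1/h) ∫_0^h α(s) ds )^p for all h ∈ (0,1] }. Then 𝓔 is a convex, closed and bounded subset of L^p(0,1). -/
open MeasureTheory Set intervalIntegral

noncomputable section

/-- Lebesgue measure restricted to `(0,1)`. -/
def mu01 : Measure ℝ := volume.restrict (Ioo 0 1)

/-- The set `𝓔` of nonnegative `α ∈ L^p(0,1)` with `‖α‖_p ≤ 1` satisfying the reverse Hölder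
condition `(1/h)∫_0^h α^p ≤ A((1/h)∫_0^h α)^p` for all `h ∈ (0,1]`. -/
def calE (A p : ℝ) : Set (Lp ℝ (ENNReal.ofReal p) mu01) :=
  {f | (∀ᵐ s ∂mu01, 0 ≤ f s) ∧ ‖f‖ ≤ 1 ∧
    ∀ h ∈ Ioc (0:ℝ) 1,
      (1 / h) * ∫ s in (0:ℝ)..h, f s ^ p ≤ A * ((1 / h) * ∫ s in (0:ℝ)..h, f s) ^ p}

open scoped ENNReal

/-!
For nonnegative `f`, taking `p`-th roots turns the reverse Hölder condition at `h` into
`‖f‖_{L^p(0,h)} ≤ (A h)^{1/p} h⁻¹ ∫_0^h f`: the norm of a continuous linear map (restriction to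
`(0,h)`) is bounded by a continuous linear functional. Each such set is convex and closed, and `𝓔`
is their intersection with the closed unit ball and the closed convex cone of nonnegative functions.
-/

theorem LinearMap.convex_setOf_norm_apply_le {E F : Type*} [AddCommGroup E] [Module ℝ E]
    [SeminormedAddCommGroup F] [NormedSpace ℝ F] (T : E →ₗ[ℝ] F) (φ : E →ₗ[ℝ] ℝ) :
    Convex ℝ {x | ‖T x‖ ≤ φ x} := by
  intro x hx y hy a b ha hb _
  calc ‖T (a • x + b • y)‖ ≤ a * ‖T x‖ + b * ‖T y‖ := by
        rw [map_add, map_smul, map_smul]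
        refine (norm_add_le _ _).trans_eq ?_
        rw [norm_smul_of_nonneg ha, norm_smul_of_nonneg hb]
    _ ≤ a * φ x + b * φ y := by gcongr <;> assumption
    _ = φ (a • x + b • y) := by simp

theorem ENNReal.one_sub_inv_toReal_nonneg (q : ℝ≥0∞) [Fact (1 ≤ q)] : 0 ≤ 1 - q.toReal⁻¹ := by
  rcases eq_or_ne q ∞ with rfl | hq
  · simp
  · have : 1 ≤ q.toReal := by simpa using ENNReal.toReal_mono hq (Fact.out : 1 ≤ q)
    exact sub_nonneg.2 (inv_le_one_of_one_le₀ this)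

namespace MeasureTheory.Lp

variable {α : Type*} [MeasurableSpace α] {μ : Measure α} {q : ℝ≥0∞} [Fact (1 ≤ q)]

instance : PosSMulMono ℝ (Lp ℝ q μ) where
  smul_le_smul_of_nonneg_left a ha f g hfg := by
    rw [← Lp.coeFn_le] at hfg ⊢
    filter_upwards [hfg, Lp.coeFn_smul a f, Lp.coeFn_smul a g] with x hx hf hg
    simpa only [hf, hg, Pi.smul_apply, smul_eq_mul] using mul_le_mul_of_nonneg_left hx ha

theorem norm_integral_le [IsFiniteMeasure μ] (f : Lp ℝ q μ) :
    ‖∫ x, f x ∂μ‖ ≤ (μ.real univ) ^ (1 - q.toReal⁻¹) * ‖f‖ := by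
  have hf := Lp.memLp f
  calc ‖∫ x, f x ∂μ‖ ≤ ∫ x, ‖f x‖ ∂μ := norm_integral_le_integral_norm _
    _ = (eLpNorm f 1 μ).toReal := by
        rw [(hf.mono_exponent Fact.out).eLpNorm_eq_integral_rpow_norm one_ne_zero
          ENNReal.one_ne_top]
        simp only [ENNReal.toReal_one, Real.rpow_one, inv_one]
        rw [ENNReal.toReal_ofReal (integral_nonneg fun x => norm_nonneg (f x))]
    _ ≤ (eLpNorm f q μ * μ univ ^ (1 - q.toReal⁻¹)).toReal := by
        refine ENNReal.toReal_mono ?_ ?_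
        · exact ENNReal.mul_ne_top (Lp.eLpNorm_ne_top f) (ENNReal.rpow_ne_top_of_nonneg
            (ENNReal.one_sub_inv_toReal_nonneg q) (measure_ne_top μ univ))
        · simpa using eLpNorm_le_eLpNorm_mul_rpow_measure_univ (p := 1) Fact.out hf.1
    _ = (μ.real univ) ^ (1 - q.toReal⁻¹) * ‖f‖ := by
        rw [ENNReal.toReal_mul, mul_comm, Lp.norm_def, ← ENNReal.toReal_rpow]; rfl

variable (μ q) in
def integralCLM [IsFiniteMeasure μ] : Lp ℝ q μ →L[ℝ] ℝ :=
  LinearMap.mkContinuous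
    { toFun f := ∫ x, f x ∂μ
      map_add' f g := by
        rw [integral_congr_ae (Lp.coeFn_add f g)]
        exact integral_add ((Lp.memLp f).integrable Fact.out) ((Lp.memLp g).integrable Fact.out)
      map_smul' c f := by
        rw [integral_congr_ae (Lp.coeFn_smul c f)]
        exact integral_smul c _ }
    _ norm_integral_le

theorem integralCLM_apply [IsFiniteMeasure μ] (f : Lp ℝ q μ) :
    integralCLM μ q f = ∫ x, f x ∂μ := rfl

end MeasureTheory.Lp

instance : IsFiniteMeasure mu01 :=
  inferInstanceAs (IsFiniteMeasure (volume.restrict (Ioo (0:ℝ) 1)))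

theorem mu01_restrict_Ioo {h : ℝ} (h1 : h ≤ 1) :
    mu01.restrict (Ioo 0 h) = volume.restrict (Ioo 0 h) := by
  rw [mu01, Measure.restrict_restrict measurableSet_Ioo, inter_eq_left.2 (Ioo_subset_Ioo_right h1)]

theorem intervalIntegral_eq_integral_mu01 (f : ℝ → ℝ) {h : ℝ} (hh : h ∈ Ioc (0:ℝ) 1) :
    ∫ s in (0:ℝ)..h, f s = ∫ s in Ioo 0 h, f s ∂mu01 := by
  rw [integral_of_le hh.1.le, integral_Ioc_eq_integral_Ioo, mu01_restrict_Ioo hh.2]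

section restrictIoo

variable {q : ℝ≥0∞} [Fact (1 ≤ q)]

variable (q) in
def restrictIoo (h : ℝ) : Lp ℝ q mu01 →L[ℝ] Lp ℝ q (mu01.restrict (Ioo 0 h)) :=
  LpToLpRestrictCLM ℝ ℝ ℝ mu01 q (Ioo 0 h)

theorem intervalIntegral_eq_integralCLM_restrictIoo (f : Lp ℝ q mu01) {h : ℝ}
    (hh : h ∈ Ioc (0:ℝ) 1) :
    ∫ s in (0:ℝ)..h, f s = Lp.integralCLM _ q (restrictIoo q h f) := by
  rw [intervalIntegral_eq_integral_mu01 _ hh, Lp.integralCLM_apply]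
  exact integral_congr_ae (LpToLpRestrictCLM_coeFn ℝ _ f).symm

theorem intervalIntegral_rpow_eq_norm_restrictIoo_rpow (hq : q ≠ ∞) (f : Lp ℝ q mu01)
    (hf : ∀ᵐ s ∂mu01, 0 ≤ f s) {h : ℝ} (hh : h ∈ Ioc (0:ℝ) 1) :
    ∫ s in (0:ℝ)..h, f s ^ q.toReal = ‖restrictIoo q h f‖ ^ q.toReal := by
  have hq0 : q ≠ 0 := (zero_lt_one.trans_le Fact.out).ne'
  set ν := mu01.restrict (Ioo 0 h)
  have hR : restrictIoo q h f =ᵐ[ν] f := LpToLpRestrictCLM_coeFn ℝ _ f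
  have hI : 0 ≤ ∫ x, ‖restrictIoo q h f x‖ ^ q.toReal ∂ν := by positivity
  rw [Lp.norm_def, (Lp.memLp _).eLpNorm_eq_integral_rpow_norm hq0 hq,
    ENNReal.toReal_ofReal (by positivity),
    Real.rpow_inv_rpow hI (ENNReal.toReal_pos hq0 hq).ne', intervalIntegral_eq_integral_mu01 _ hh]
  refine integral_congr_ae ?_
  filter_upwards [hR, ae_restrict_of_ae hf] with x hx hfx
  rw [hx, Real.norm_of_nonneg hfx]

end restrictIoo

theorem one_div_mul_rpow_le_iff {A h p X Y : ℝ} (hA : 0 ≤ A) (hh : 0 < h) (hp : 0 < p)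
    (hX : 0 ≤ X) (hY : 0 ≤ Y) :
    1 / h * X ^ p ≤ A * (1 / h * Y) ^ p ↔ X ≤ (A * h) ^ p⁻¹ * (1 / h * Y) := by
  have hAh : 0 ≤ A * h := by positivity
  rw [one_div_mul_eq_div, div_le_iff₀' hh, one_div_mul_eq_div,
    ← Real.rpow_le_rpow_iff hX (by positivity) hp,
    Real.mul_rpow (Real.rpow_nonneg hAh _) (by positivity), Real.rpow_inv_rpow hAh hp.ne',
    mul_left_comm h A, mul_assoc A h]

def reverseHolderBound (A p h : ℝ) [Fact (1 ≤ ENNReal.ofReal p)] :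
    Lp ℝ (ENNReal.ofReal p) mu01 →L[ℝ] ℝ :=
  ((A * h) ^ p⁻¹ * (1 / h)) • (Lp.integralCLM _ _ ∘L restrictIoo _ h)

theorem reverseHolder_iff_norm_restrictIoo_le {A p : ℝ} (hA : 0 ≤ A)
    [Fact (1 ≤ ENNReal.ofReal p)] (f : Lp ℝ (ENNReal.ofReal p) mu01) (hf : ∀ᵐ s ∂mu01, 0 ≤ f s)
    {h : ℝ} (hh : h ∈ Ioc (0:ℝ) 1) :
    1 / h * ∫ s in (0:ℝ)..h, f s ^ p ≤ A * (1 / h * ∫ s in (0:ℝ)..h, f s) ^ p ↔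
      ‖restrictIoo _ h f‖ ≤ reverseHolderBound A p h f := by
  have hp : 1 ≤ p := ENNReal.one_le_ofReal.1 Fact.out
  have hpq : (ENNReal.ofReal p).toReal = p := ENNReal.toReal_ofReal (by linarith)
  have hI : 0 ≤ ∫ s in (0:ℝ)..h, f s := by
    rw [intervalIntegral_eq_integral_mu01 _ hh]
    exact integral_nonneg_of_ae (ae_restrict_of_ae hf)
  have hnorm := intervalIntegral_rpow_eq_norm_restrictIoo_rpow ENNReal.ofReal_ne_top f hf hh
  rw [hpq] at hnorm
  rw [hnorm, one_div_mul_rpow_le_iff hA hh.1 (by linarith) (norm_nonneg _) hI,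
    intervalIntegral_eq_integralCLM_restrictIoo f hh, reverseHolderBound]
  simp only [_root_.smul_apply, ContinuousLinearMap.comp_apply, smul_eq_mul, mul_assoc]

theorem calE_eq {A p : ℝ} (hA : 0 ≤ A) [Fact (1 ≤ ENNReal.ofReal p)] :
    calE A p = Ici 0 ∩ Metric.closedBall 0 1 ∩
      ⋂ h ∈ Ioc (0:ℝ) 1, {f | ‖restrictIoo _ h f‖ ≤ reverseHolderBound A p h f} := by
  ext f
  simp only [calE, mem_ofPred_eq, mem_inter_iff, mem_Ici, Metric.mem_closedBall, dist_zero_right,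
    mem_iInter, ← Lp.coeFn_nonneg]
  constructor
  · rintro ⟨hf, h1, hE⟩
    exact ⟨⟨hf, h1⟩, fun h hh => (reverseHolder_iff_norm_restrictIoo_le hA f hf hh).1 (hE h hh)⟩
  · rintro ⟨⟨hf, h1⟩, hE⟩
    exact ⟨hf, h1, fun h hh => (reverseHolder_iff_norm_restrictIoo_le hA f hf hh).2 (hE h hh)⟩

theorem calE_convex_closed_bounded_general (A p : ℝ) (hA : 1 < A)
    [Fact (1 ≤ ENNReal.ofReal p)] :
    Convex ℝ (calE A p) ∧ IsClosed (calE A p) ∧ Bornology.IsBounded (calE A p) := by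
  rw [calE_eq (zero_le_one.trans hA.le)]
  refine ⟨?_, ?_, Metric.isBounded_closedBall.subset (inter_subset_left.trans inter_subset_right)⟩
  · refine ((convex_Ici 0).inter (convex_closedBall 0 1)).inter (convex_iInter₂ fun h _ => ?_)
    exact LinearMap.convex_setOf_norm_apply_le (restrictIoo _ h).toLinearMap
      (reverseHolderBound A p h).toLinearMap
  · refine (isClosed_Ici.inter Metric.isClosed_closedBall).inter (isClosed_biInter fun h _ => ?_)
    exact isClosed_le (restrictIoo _ h).continuous.norm (reverseHolderBound A p h).continuous

/-- `𝓔` is convex, closed and bounded in `L^p(0,1)`. -/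
theorem calE_convex_closed_bounded (A p : ℝ) (hA : 1 < A) (hp : 1 < p)
    [Fact (1 ≤ ENNReal.ofReal p)] :
    Convex ℝ (calE A p) ∧ IsClosed (calE A p) ∧ Bornology.IsBounded (calE A p) :=
  calE_convex_closed_bounded_general A p hA
end
end

section
/- Let A > 1, p > 1, τ ∈ (0,1], let 𝓔 = { α ∈ L^p(0,1) : α ≥ 0 a.e., ‖α‖_{L^p} ≤ 1, and (1/h) ∫_0^h α(s)^p ds ≤ A ( (1/h) ∫_0^h α(s) ds )^p for all h ∈ (0,1] }, and let ᾱ_τ be the unique maximizer of ∫_0^τ α over 𝓔. If for some h ∈ [τ,1) the reverse Hölder inequality is strict for ᾱ_τ at h, i.e. (1/h) ∫_0^h ᾱ_τ(s)^p ds < A ( (1/h) ∫_0^h ᾱ_τ(s) ds )^p, then ᾱ_τ is (a.e. equal to) a constant on a neighbourhood of h in [τ,1]. -/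
/-!
Write `F(x) = ∫_0^x ᾱ` and `P(x) = ∫_0^x ᾱ^p`. Strictness at `h` reads `h^(p-1) P(h) < A F(h)^p`,
so by continuity `b^(p-1) P(b) < A F(a)^p` for `a = max τ (h - ε)` and `b = h + ε` with `ε > 0`
small. If `ᾱ` were not a.e. constant on `(a, b]`, replace it there by its mean. This keeps
`∫_0^t` for `t ∉ (a, b)`, does not increase `∫_0^t (·)^p` (Jensen) and strictly decreases the
`L^p` norm, while the reverse Hölder inequality at `t ∈ (a, b)` follows from the gap above by
monotonicity of `F` and `P`. Rescaled to norm one, this competitor has a strictly larger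
`∫_0^τ`, because `τ ≤ a` and `∫_0^τ ᾱ ≥ τ > 0` (compare with `α = 1`).
-/

open MeasureTheory Set intervalIntegral

noncomputable section

/-- `f` is a maximizer of `α ↦ ∫_0^τ α` over `𝓔`. -/
def IsMaximizer (A p τ : ℝ) (f : Lp ℝ (ENNReal.ofReal p) mu01) : Prop :=
  f ∈ calE A p ∧ ∀ g ∈ calE A p, ∫ s in (0:ℝ)..τ, g s ≤ ∫ s in (0:ℝ)..τ, f s

open Filter Topology

lemma MeasureTheory.MemLp.integrable_rpow_of_nonneg {α : Type*} [MeasurableSpace α]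
    {μ : Measure α} {p : ℝ} {u : α → ℝ} (hu : MemLp u (ENNReal.ofReal p) μ) (hp : 0 < p)
    (hnn : 0 ≤ᵐ[μ] u) :
    Integrable (fun x => u x ^ p) μ := by
  refine (hu.integrable_norm_rpow (by simpa using hp) ENNReal.ofReal_ne_top).congr ?_
  filter_upwards [hnn] with x hx
  rw [ENNReal.toReal_ofReal hp.le, Real.norm_of_nonneg hx]

lemma MeasureTheory.Lp.norm_rpow_eq_integral_of_nonneg {α : Type*} [MeasurableSpace α]
    {μ : Measure α} {p : ℝ} (hp : 0 < p) {g : Lp ℝ (ENNReal.ofReal p) μ} (hg : 0 ≤ᵐ[μ] g) : ‖g‖ ^ p = ∫ x, g x ^ p ∂μ := by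
  rw [Lp.norm_def, (Lp.memLp g).eLpNorm_eq_integral_rpow_norm (by simpa using hp)
    ENNReal.ofReal_ne_top, ENNReal.toReal_ofReal hp.le, ENNReal.toReal_ofReal
    (by positivity), ← Real.rpow_mul (integral_nonneg fun _ => by positivity),
    inv_mul_cancel₀ hp.ne', Real.rpow_one]
  refine integral_congr_ae ?_
  filter_upwards [hg] with x hx
  rw [Real.norm_of_nonneg hx]

section Flatten

open scoped Classical

variable {α : Type*} [MeasurableSpace α] {μ : Measure α} {S T : Set α} {u : α → ℝ}

def flattenOn (μ : Measure α) (S : Set α) (u : α → ℝ) : α → ℝ :=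
  S.piecewise (fun _ => ⨍ x in S, u x ∂μ) u

lemma flattenOn_eqOn_compl : EqOn (flattenOn μ S u) u Sᶜ :=
  S.piecewise_eqOn_compl _ _

lemma setAverage_nonneg (hu : 0 ≤ᵐ[μ.restrict S] u) : 0 ≤ ⨍ x in S, u x ∂μ := by
  rw [setAverage_eq]
  exact smul_nonneg (inv_nonneg.2 measureReal_nonneg) (integral_nonneg_of_ae hu)

lemma flattenOn_nonneg {ν : Measure α} (hS : 0 ≤ᵐ[μ.restrict S] u) (hu : 0 ≤ᵐ[ν] u) :
    0 ≤ᵐ[ν] flattenOn μ S u := by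
  filter_upwards [hu] with x hx
  by_cases hxS : x ∈ S
  · rw [flattenOn, S.piecewise_eq_of_mem _ _ hxS]
    exact setAverage_nonneg hS
  · rwa [flattenOn, S.piecewise_eq_of_notMem _ _ hxS]

lemma memLp_flattenOn {ν : Measure α} [IsFiniteMeasure ν] {q : ENNReal} (hS : MeasurableSet S)
    (hu : MemLp u q ν) : MemLp (flattenOn μ S u) q ν :=
  MemLp.piecewise hS (memLp_const _) (hu.restrict Sᶜ)

lemma setIntegral_piecewise_of_subset {f g : α → ℝ} (hS : MeasurableSet S) (hST : S ⊆ T)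
    (hf : IntegrableOn f S μ) (hg : IntegrableOn g T μ) :
    ∫ x in T, S.piecewise f g x ∂μ = ∫ x in S, f x ∂μ + ∫ x in T \ S, g x ∂μ := by
  have hTS : (μ.restrict T).restrict S = μ.restrict S := by
    rw [Measure.restrict_restrict hS, inter_eq_left.2 hST]
  rw [integral_piecewise hS (by rwa [IntegrableOn, hTS]) hg.integrableOn, hTS,
    Measure.restrict_restrict hS.compl, inter_comm, sdiff_eq]

lemma setIntegral_comp_flattenOn (φ : ℝ → ℝ) (hS : MeasurableSet S) (hST : S ⊆ T)
    (hSfin : μ S ≠ ⊤) (hφu : IntegrableOn (fun x => φ (u x)) T μ) :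
    ∫ x in T, φ (flattenOn μ S u x) ∂μ =
      μ.real S * φ (⨍ x in S, u x ∂μ) + ∫ x in T \ S, φ (u x) ∂μ := by
  have hφ : ∀ x, φ (flattenOn μ S u x) =
      S.piecewise (fun _ => φ (⨍ x in S, u x ∂μ)) (fun x => φ (u x)) x :=
    fun x => S.apply_piecewise _ _ (fun _ => φ)
  simp_rw [hφ]
  rw [setIntegral_piecewise_of_subset hS hST (integrableOn_const hSfin) hφu, setIntegral_const,
    smul_eq_mul]

lemma setIntegral_flattenOn (hS : MeasurableSet S) (hST : S ⊆ T) (hSfin : μ S ≠ ⊤)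
    (hu : IntegrableOn u T μ) : ∫ x in T, flattenOn μ S u x ∂μ = ∫ x in T, u x ∂μ := by
  refine (setIntegral_comp_flattenOn id hS hST hSfin hu).trans ?_
  rw [id, ← smul_eq_mul, measure_smul_setAverage _ hSfin]
  simpa only [inter_eq_right.2 hST, id] using integral_inter_add_sdiff hS hu

lemma measureReal_mul_rpow_setAverage_le {p : ℝ} (hp : 1 ≤ p) (hSfin : μ S ≠ ⊤)
    (hnn : 0 ≤ᵐ[μ.restrict S] u) (hu : IntegrableOn u S μ)
    (hup : IntegrableOn (fun x => u x ^ p) S μ) :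
    μ.real S * (⨍ x in S, u x ∂μ) ^ p ≤ ∫ x in S, u x ^ p ∂μ := by
  rcases eq_or_ne (μ S) 0 with hS0 | hS0
  · rw [measureReal_def, hS0, ENNReal.toReal_zero, zero_mul]
    exact integral_nonneg_of_ae (hnn.mono fun x hx => Real.rpow_nonneg hx p)
  have hjensen := (convexOn_rpow hp).map_set_average_le
    (continuousOn_id.rpow_const fun _ _ => Or.inr (by linarith)) isClosed_Ici hS0 hSfin hnn hu hup
  rw [← measure_smul_setAverage _ hSfin, smul_eq_mul]
  exact mul_le_mul_of_nonneg_left hjensen measureReal_nonneg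

lemma measureReal_mul_rpow_setAverage_lt {p : ℝ} (hp : 1 < p) (hSfin : μ S ≠ ⊤)
    (hnn : 0 ≤ᵐ[μ.restrict S] u) (hu : IntegrableOn u S μ)
    (hup : IntegrableOn (fun x => u x ^ p) S μ)
    (hnc : ¬ u =ᵐ[μ.restrict S] Function.const α (⨍ x in S, u x ∂μ)) :
    μ.real S * (⨍ x in S, u x ∂μ) ^ p < ∫ x in S, u x ^ p ∂μ := by
  have : IsFiniteMeasure (μ.restrict S) := isFiniteMeasure_restrict.2 hSfin
  have hS0 : μ S ≠ 0 := fun h0 =>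
    hnc (by rw [Measure.restrict_eq_zero.2 h0, ae_zero]; exact eventually_bot)
  have hjensen := ((strictConvexOn_rpow hp).ae_eq_const_or_map_average_lt
    (continuousOn_id.rpow_const fun _ _ => Or.inr (by linarith)) isClosed_Ici hnn hu
    hup).resolve_left hnc
  rw [← measure_smul_setAverage _ hSfin, smul_eq_mul]
  exact mul_lt_mul_of_pos_left hjensen (ENNReal.toReal_pos hS0 hSfin)

lemma setIntegral_rpow_flattenOn_le {p : ℝ} (hp : 1 ≤ p) (hS : MeasurableSet S) (hST : S ⊆ T)
    (hSfin : μ S ≠ ⊤) (hnn : 0 ≤ᵐ[μ.restrict S] u) (hu : IntegrableOn u S μ)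
    (hup : IntegrableOn (fun x => u x ^ p) T μ) :
    ∫ x in T, flattenOn μ S u x ^ p ∂μ ≤ ∫ x in T, u x ^ p ∂μ := by
  rw [setIntegral_comp_flattenOn (· ^ p) hS hST hSfin hup,
    ← integral_inter_add_sdiff hS hup, inter_eq_right.2 hST]
  gcongr
  exact measureReal_mul_rpow_setAverage_le hp hSfin hnn hu (hup.mono_set hST)

lemma setIntegral_rpow_flattenOn_lt {p : ℝ} (hp : 1 < p) (hS : MeasurableSet S) (hST : S ⊆ T)
    (hSfin : μ S ≠ ⊤) (hnn : 0 ≤ᵐ[μ.restrict S] u) (hu : IntegrableOn u S μ)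
    (hup : IntegrableOn (fun x => u x ^ p) T μ)
    (hnc : ¬ u =ᵐ[μ.restrict S] Function.const α (⨍ x in S, u x ∂μ)) :
    ∫ x in T, flattenOn μ S u x ^ p ∂μ < ∫ x in T, u x ^ p ∂μ := by
  rw [setIntegral_comp_flattenOn (· ^ p) hS hST hSfin hup,
    ← integral_inter_add_sdiff hS hup, inter_eq_right.2 hST]
  gcongr
  exact measureReal_mul_rpow_setAverage_lt hp hSfin hnn hu (hup.mono_set hST) hnc

end Flatten

instance : IsProbabilityMeasure mu01 :=
  ⟨by simp [mu01, Real.volume_Ioo]⟩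

lemma volume_restrict_Icc_zero_one : volume.restrict (Icc (0:ℝ) 1) = mu01 :=
  (Measure.restrict_congr_set Ioo_ae_eq_Icc).symm

lemma ae_restrict_of_ae_mu01 {P : ℝ → Prop} (hP : ∀ᵐ s ∂mu01, P s) {S : Set ℝ}
    (hS : S ⊆ Icc 0 1) : ∀ᵐ s ∂volume.restrict S, P s := by
  rw [← volume_restrict_Icc_zero_one] at hP
  exact ae_restrict_of_ae_restrict_of_subset hS hP

lemma integrableOn_of_integrable_mu01 {u : ℝ → ℝ} (hu : Integrable u mu01) {S : Set ℝ}
    (hS : S ⊆ Icc 0 1) : IntegrableOn u S := by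
  rw [← volume_restrict_Icc_zero_one] at hu
  exact IntegrableOn.mono_set hu hS

lemma intervalIntegrable_of_integrable_mu01 {u : ℝ → ℝ} (hu : Integrable u mu01) {a b : ℝ}
    (ha : 0 ≤ a) (hab : a ≤ b) (hb : b ≤ 1) : IntervalIntegrable u volume a b :=
  (intervalIntegrable_iff_integrableOn_Ioc_of_le hab).2
    (integrableOn_of_integrable_mu01 hu (Ioc_subset_Icc_self.trans (Icc_subset_Icc ha hb)))

lemma intervalIntegral_congr_mu01 {u v : ℝ → ℝ} (huv : u =ᵐ[mu01] v) {t : ℝ}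
    (ht : t ∈ Icc (0:ℝ) 1) : ∫ s in (0:ℝ)..t, u s = ∫ s in (0:ℝ)..t, v s := by
  rw [integral_of_le ht.1, integral_of_le ht.1]
  exact integral_congr_ae (ae_restrict_of_ae_mu01 huv
    (Ioc_subset_Icc_self.trans (Icc_subset_Icc le_rfl ht.2)))

-- `f ∈ calE A p` unfolds to `ReverseHolderAt A p f t` for every `t ∈ Ioc 0 1`.
def ReverseHolderAt (A p : ℝ) (u : ℝ → ℝ) (t : ℝ) : Prop :=
  (1 / t) * ∫ s in (0:ℝ)..t, u s ^ p ≤ A * ((1 / t) * ∫ s in (0:ℝ)..t, u s) ^ p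

section ReverseHolder

variable {A p t : ℝ} {u v : ℝ → ℝ}

lemma one_div_mul_eq_one_div_rpow_mul (ht : 0 < t) (L : ℝ) :
    1 / t * L = (1 / t) ^ p * (t ^ (p - 1) * L) := by
  rw [← mul_assoc, Real.rpow_sub ht, Real.rpow_one, one_div, Real.inv_rpow ht.le]
  field_simp

lemma mul_one_div_mul_rpow (ht : 0 < t) {X : ℝ} (hX : 0 ≤ X) :
    A * (1 / t * X) ^ p = (1 / t) ^ p * (A * X ^ p) := by
  rw [Real.mul_rpow (by positivity) hX]
  ring

lemma one_div_mul_le_mul_rpow_iff (ht : 0 < t) {L X : ℝ} (hX : 0 ≤ X) :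
    1 / t * L ≤ A * (1 / t * X) ^ p ↔ t ^ (p - 1) * L ≤ A * X ^ p := by
  rw [one_div_mul_eq_one_div_rpow_mul ht, mul_one_div_mul_rpow ht hX]
  exact mul_le_mul_iff_right₀ (by positivity)

lemma one_div_mul_lt_mul_rpow_iff (ht : 0 < t) {L X : ℝ} (hX : 0 ≤ X) :
    1 / t * L < A * (1 / t * X) ^ p ↔ t ^ (p - 1) * L < A * X ^ p := by
  rw [one_div_mul_eq_one_div_rpow_mul ht, mul_one_div_mul_rpow ht hX]
  exact mul_lt_mul_iff_right₀ (by positivity)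

lemma reverseHolderAt_congr_mu01 (huv : u =ᵐ[mu01] v) (ht : t ∈ Icc (0:ℝ) 1) :
    ReverseHolderAt A p u t ↔ ReverseHolderAt A p v t := by
  rw [ReverseHolderAt, ReverseHolderAt, intervalIntegral_congr_mu01 huv ht,
    intervalIntegral_congr_mu01 (u := fun s => u s ^ p) (v := fun s => v s ^ p)
      (huv.fun_comp (· ^ p)) ht]

lemma ReverseHolderAt.const_mul {c : ℝ} (hc : 0 ≤ c) (ht : 0 ≤ t)
    (hnn : 0 ≤ᵐ[volume.restrict (Ioc 0 t)] u) (h : ReverseHolderAt A p u t) :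
    ReverseHolderAt A p (fun s => c * u s) t := by
  have hpow : ∫ s in (0:ℝ)..t, (c * u s) ^ p = c ^ p * ∫ s in (0:ℝ)..t, u s ^ p := by
    rw [← intervalIntegral.integral_const_mul, integral_of_le ht, integral_of_le ht]
    refine integral_congr_ae ?_
    filter_upwards [hnn] with s hs
    exact Real.mul_rpow hc hs
  have hX : 0 ≤ 1 / t * ∫ s in (0:ℝ)..t, u s :=
    mul_nonneg (by positivity) (by rw [integral_of_le ht]; exact integral_nonneg_of_ae hnn)
  unfold ReverseHolderAt at h ⊢
  rw [hpow, intervalIntegral.integral_const_mul]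
  calc 1 / t * (c ^ p * ∫ s in (0:ℝ)..t, u s ^ p)
      = c ^ p * (1 / t * ∫ s in (0:ℝ)..t, u s ^ p) := by ring
    _ ≤ c ^ p * (A * (1 / t * ∫ s in (0:ℝ)..t, u s) ^ p) :=
        mul_le_mul_of_nonneg_left h (by positivity)
    _ = A * (1 / t * (c * ∫ s in (0:ℝ)..t, u s)) ^ p := by
        rw [mul_left_comm (1 / t), Real.mul_rpow hc hX]
        ring

lemma ReverseHolderAt.of_integral_eq_of_le (ht : 0 ≤ t)
    (heq : ∫ s in (0:ℝ)..t, v s = ∫ s in (0:ℝ)..t, u s)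
    (hle : ∫ s in (0:ℝ)..t, v s ^ p ≤ ∫ s in (0:ℝ)..t, u s ^ p)
    (h : ReverseHolderAt A p u t) : ReverseHolderAt A p v t := by
  unfold ReverseHolderAt at h ⊢
  rw [heq]
  exact (mul_le_mul_of_nonneg_left hle (by positivity)).trans h

end ReverseHolder

section Maximizer

variable {A p τ : ℝ} {f : Lp ℝ (ENNReal.ofReal p) mu01}

lemma const_one_mem_calE (hA : 1 ≤ A) :
    Lp.const (ENNReal.ofReal p) mu01 (1 : ℝ) ∈ calE A p := by
  have hone := Lp.coeFn_const (p := ENNReal.ofReal p) (μ := mu01) (c := (1 : ℝ))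
  refine ⟨?_, ?_, fun t ht => ?_⟩
  · filter_upwards [hone] with s hs
    rw [hs]
    exact zero_le_one
  · exact (Lp.norm_const_le _ _ _).trans (by simp)
  · change ReverseHolderAt A p _ t
    rw [reverseHolderAt_congr_mu01 hone (Ioc_subset_Icc_self ht), ReverseHolderAt]
    simpa [ht.1.ne'] using hA

lemma IsMaximizer.le_integral (hf : IsMaximizer A p τ f) (hA : 1 ≤ A)
    (hτ : τ ∈ Icc (0:ℝ) 1) : τ ≤ ∫ s in (0:ℝ)..τ, f s := by
  have h := hf.2 _ (const_one_mem_calE hA)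
  rw [intervalIntegral_congr_mu01 (Lp.coeFn_const _ _ _) hτ] at h
  simpa using h

lemma IsMaximizer.one_le_norm_toLp [Fact (1 ≤ ENNReal.ofReal p)] (hf : IsMaximizer A p τ f)
    (hA : 1 ≤ A) (hτ : τ ∈ Ioc (0:ℝ) 1) {G : ℝ → ℝ} (hG : MemLp G (ENNReal.ofReal p) mu01)
    (hnn : 0 ≤ᵐ[mu01] G) (hRH : ∀ t ∈ Ioc (0:ℝ) 1, ReverseHolderAt A p G t)
    (hint : ∫ s in (0:ℝ)..τ, f s ≤ ∫ s in (0:ℝ)..τ, G s) : 1 ≤ ‖hG.toLp G‖ := by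
  set g := hG.toLp G
  have hτI : τ ∈ Icc (0:ℝ) 1 := Ioc_subset_Icc_self hτ
  have hGτ : 0 < ∫ s in (0:ℝ)..τ, G s := hτ.1.trans_le ((hf.le_integral hA hτI).trans hint)
  have hg0 : 0 < ‖g‖ := by
    rw [norm_pos_iff, Ne, Lp.eq_zero_iff_ae_eq_zero]
    intro h0
    rw [intervalIntegral_congr_mu01 (hG.coeFn_toLp.symm.trans h0) hτI] at hGτ
    simp at hGτ
  by_contra! hlt
  set c := ‖g‖⁻¹
  have hc : 1 < c := (one_lt_inv₀ hg0).2 hlt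
  have hcg : ⇑(c • g) =ᵐ[mu01] fun s => c * G s := by
    filter_upwards [Lp.coeFn_smul c g, hG.coeFn_toLp] with s h1 h2
    rw [h1, Pi.smul_apply, h2, smul_eq_mul]
  have hmem : c • g ∈ calE A p := by
    refine ⟨?_, ?_, fun t ht => ?_⟩
    · filter_upwards [hcg, hnn] with s h1 h2
      rw [h1]
      exact mul_nonneg (by positivity) h2
    · rw [norm_smul, norm_inv, norm_norm, inv_mul_cancel₀ hg0.ne']
    · exact (reverseHolderAt_congr_mu01 hcg (Ioc_subset_Icc_self ht)).2
        ((hRH t ht).const_mul (by positivity) ht.1.le (ae_restrict_of_ae_mu01 hnn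
          (Ioc_subset_Icc_self.trans (Icc_subset_Icc le_rfl ht.2))))
  have hmax := hf.2 _ hmem
  rw [intervalIntegral_congr_mu01 hcg hτI, intervalIntegral.integral_const_mul] at hmax
  nlinarith

end Maximizer

section FlattenInterval

variable {a b t p : ℝ} {u : ℝ → ℝ}

lemma Ioc_zero_subset_compl_Ioc (hta : t ≤ a) : Ioc 0 t ⊆ (Ioc a b)ᶜ :=
  fun _ hs hs' => (hs.2.trans hta).not_gt hs'.1

lemma intervalIntegral_flattenOn_Ioc (ha : 0 ≤ a) (ht : 0 ≤ t) (htab : t ∉ Ioo a b)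
    (hu : IntegrableOn u (Ioc 0 t)) :
    ∫ s in (0:ℝ)..t, flattenOn volume (Ioc a b) u s = ∫ s in (0:ℝ)..t, u s := by
  rw [integral_of_le ht, integral_of_le ht]
  rcases le_or_gt t a with hta | hat
  · exact setIntegral_congr_fun measurableSet_Ioc
      (flattenOn_eqOn_compl.mono (Ioc_zero_subset_compl_Ioc hta))
  · have hbt : b ≤ t := not_lt.1 fun htb => htab ⟨hat, htb⟩
    exact setIntegral_flattenOn measurableSet_Ioc (Ioc_subset_Ioc ha hbt)
      measure_Ioc_lt_top.ne hu

lemma intervalIntegral_rpow_flattenOn_Ioc_le (hp : 1 ≤ p) (ha : 0 ≤ a) (ht : 0 ≤ t)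
    (htab : t ∉ Ioo a b) (hnn : 0 ≤ᵐ[volume.restrict (Ioc a b)] u)
    (hu : IntegrableOn u (Ioc a b)) (hup : IntegrableOn (fun s => u s ^ p) (Ioc 0 t)) :
    ∫ s in (0:ℝ)..t, flattenOn volume (Ioc a b) u s ^ p ≤ ∫ s in (0:ℝ)..t, u s ^ p := by
  rw [integral_of_le ht, integral_of_le ht]
  rcases le_or_gt t a with hta | hat
  · refine (setIntegral_congr_fun measurableSet_Ioc fun s hs => ?_).le
    rw [flattenOn_eqOn_compl (Ioc_zero_subset_compl_Ioc hta hs)]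
  · have hbt : b ≤ t := not_lt.1 fun htb => htab ⟨hat, htb⟩
    exact setIntegral_rpow_flattenOn_le hp measurableSet_Ioc (Ioc_subset_Ioc ha hbt)
      measure_Ioc_lt_top.ne hnn hu hup

end FlattenInterval

section Competitor

variable {A p a b t : ℝ}

lemma reverseHolderAt_of_rpow_mul_le {G : ℝ → ℝ} (hA : 0 ≤ A) (hp : 1 ≤ p) (ha : 0 ≤ a)
    (ht : t ∈ Ioo a b) (hnn : 0 ≤ᵐ[volume.restrict (Ioc 0 b)] G)
    (hG : IntervalIntegrable G volume 0 b)
    (hGp : IntervalIntegrable (fun s => G s ^ p) volume 0 b)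
    (hgap : b ^ (p - 1) * ∫ s in (0:ℝ)..b, G s ^ p ≤ A * (∫ s in (0:ℝ)..a, G s) ^ p) :
    ReverseHolderAt A p G t := by
  have ht0 : 0 < t := ha.trans_lt ht.1
  have hnn' : ∀ {d : ℝ}, d ≤ b → 0 ≤ᵐ[volume.restrict (Ioc 0 d)] G := fun hd =>
    ae_restrict_of_ae_restrict_of_subset (Ioc_subset_Ioc le_rfl hd) hnn
  have hGa : 0 ≤ ∫ s in (0:ℝ)..a, G s := by
    rw [integral_of_le ha]
    exact integral_nonneg_of_ae (hnn' (ht.1.trans ht.2).le)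
  have hGat : ∫ s in (0:ℝ)..a, G s ≤ ∫ s in (0:ℝ)..t, G s :=
    integral_mono_interval le_rfl ha ht.1.le (hnn' ht.2.le)
      (hG.mono_set (uIcc_subset_uIcc_left (Icc_subset_uIcc ⟨ht0.le, ht.2.le⟩)))
  have hGtb : ∫ s in (0:ℝ)..t, G s ^ p ≤ ∫ s in (0:ℝ)..b, G s ^ p :=
    integral_mono_interval le_rfl ht0.le ht.2.le
      (hnn.mono fun s hs => Real.rpow_nonneg hs p) hGp
  have hGt : 0 ≤ ∫ s in (0:ℝ)..t, G s ^ p := by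
    rw [integral_of_le ht0.le]
    exact integral_nonneg_of_ae ((hnn' ht.2.le).mono fun s hs => Real.rpow_nonneg hs p)
  unfold ReverseHolderAt
  rw [one_div_mul_le_mul_rpow_iff ht0 (hGa.trans hGat)]
  calc t ^ (p - 1) * ∫ s in (0:ℝ)..t, G s ^ p
      ≤ b ^ (p - 1) * ∫ s in (0:ℝ)..b, G s ^ p :=
        mul_le_mul (Real.rpow_le_rpow ht0.le ht.2.le (by linarith)) hGtb hGt
          (Real.rpow_nonneg (ht0.trans ht.2).le _)
    _ ≤ A * (∫ s in (0:ℝ)..a, G s) ^ p := hgap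
    _ ≤ A * (∫ s in (0:ℝ)..t, G s) ^ p := by gcongr

variable [Fact (1 ≤ ENNReal.ofReal p)] {f : Lp ℝ (ENNReal.ofReal p) mu01}

lemma reverseHolderAt_flattenOn_Ioc (hA : 0 ≤ A) (hp : 1 ≤ p) (hf : f ∈ calE A p)
    (ha : 0 ≤ a) (hb : b ≤ 1)
    (hgap : b ^ (p - 1) * ∫ s in (0:ℝ)..b, f s ^ p ≤ A * (∫ s in (0:ℝ)..a, f s) ^ p)
    (ht : t ∈ Ioc (0:ℝ) 1) : ReverseHolderAt A p (flattenOn volume (Ioc a b) f) t := by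
  obtain ⟨hnn, -, hRH⟩ := hf
  set G := flattenOn volume (Ioc a b) f
  have hsub : ∀ {c d : ℝ}, 0 ≤ c → d ≤ 1 → Ioc c d ⊆ Icc 0 1 :=
    fun hc hd => Ioc_subset_Icc_self.trans (Icc_subset_Icc hc hd)
  have hu : Integrable f mu01 := (Lp.memLp f).integrable Fact.out
  have hup : Integrable (fun s => f s ^ p) mu01 :=
    (Lp.memLp f).integrable_rpow_of_nonneg (by linarith) hnn
  have hGmem : MemLp G (ENNReal.ofReal p) mu01 := memLp_flattenOn measurableSet_Ioc (Lp.memLp f)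
  have hGnn : 0 ≤ᵐ[mu01] G := flattenOn_nonneg (ae_restrict_of_ae_mu01 hnn (hsub ha hb)) hnn
  have hflat : ∀ t' ∈ Icc (0:ℝ) 1, t' ∉ Ioo a b →
      ∫ s in (0:ℝ)..t', G s = ∫ s in (0:ℝ)..t', f s ∧
        ∫ s in (0:ℝ)..t', G s ^ p ≤ ∫ s in (0:ℝ)..t', f s ^ p := fun t' ht' ht'ab =>
    ⟨intervalIntegral_flattenOn_Ioc ha ht'.1 ht'ab
      (integrableOn_of_integrable_mu01 hu (hsub le_rfl ht'.2)),
     intervalIntegral_rpow_flattenOn_Ioc_le hp ha ht'.1 ht'ab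
      (ae_restrict_of_ae_mu01 hnn (hsub ha hb)) (integrableOn_of_integrable_mu01 hu (hsub ha hb))
      (integrableOn_of_integrable_mu01 hup (hsub le_rfl ht'.2))⟩
  by_cases htab : t ∈ Ioo a b
  · have hb0 : 0 ≤ b := ha.trans (htab.1.trans htab.2).le
    refine reverseHolderAt_of_rpow_mul_le hA hp ha htab
      (ae_restrict_of_ae_mu01 hGnn (hsub le_rfl hb))
      (intervalIntegrable_of_integrable_mu01 (hGmem.integrable Fact.out) le_rfl hb0 hb)
      (intervalIntegrable_of_integrable_mu01
        (hGmem.integrable_rpow_of_nonneg (by linarith) hGnn) le_rfl hb0 hb) ?_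
    rw [(hflat a ⟨ha, (htab.1.trans htab.2).le.trans hb⟩ fun h => h.1.false).1]
    exact (mul_le_mul_of_nonneg_left (hflat b ⟨hb0, hb⟩ fun h => h.2.false).2
      (Real.rpow_nonneg hb0 _)).trans hgap
  · obtain ⟨heq, hle⟩ := hflat t (Ioc_subset_Icc_self ht) htab
    exact ReverseHolderAt.of_integral_eq_of_le ht.1.le heq hle (hRH t ht)

end Competitor

lemma IsMaximizer.ae_eq_setAverage_Ioc {A p τ a b : ℝ} [Fact (1 ≤ ENNReal.ofReal p)]
    {f : Lp ℝ (ENNReal.ofReal p) mu01} (hf : IsMaximizer A p τ f) (hA : 1 ≤ A) (hp : 1 < p)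
    (hτ : τ ∈ Ioc (0:ℝ) 1) (hτa : τ ≤ a) (hb : b < 1)
    (hgap : b ^ (p - 1) * ∫ s in (0:ℝ)..b, f s ^ p ≤ A * (∫ s in (0:ℝ)..a, f s) ^ p) :
    f =ᵐ[volume.restrict (Ioc a b)] Function.const ℝ (⨍ s in Ioc a b, f s) := by
  by_contra hnc
  have hp0 : 0 < p := by linarith
  have ha : 0 ≤ a := hτ.1.le.trans hτa
  have hsub : Ioc a b ⊆ Ioo 0 1 := fun s hs => ⟨ha.trans_lt hs.1, hs.2.trans_lt hb⟩
  obtain ⟨hnn, hnorm, -⟩ := hf.1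
  have hu : Integrable f mu01 := (Lp.memLp f).integrable Fact.out
  set G := flattenOn volume (Ioc a b) f
  have hnnab : 0 ≤ᵐ[volume.restrict (Ioc a b)] f :=
    ae_restrict_of_ae_mu01 hnn (hsub.trans Ioo_subset_Icc_self)
  have hGmem : MemLp G (ENNReal.ofReal p) mu01 := memLp_flattenOn measurableSet_Ioc (Lp.memLp f)
  have hGnn : 0 ≤ᵐ[mu01] G := flattenOn_nonneg hnnab hnn
  have hGlt : ∫ s, G s ^ p ∂mu01 < ∫ s, f s ^ p ∂mu01 :=
    setIntegral_rpow_flattenOn_lt hp measurableSet_Ioc hsub measure_Ioc_lt_top.ne hnnab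
      (integrableOn_of_integrable_mu01 hu (hsub.trans Ioo_subset_Icc_self))
      ((Lp.memLp f).integrable_rpow_of_nonneg hp0 hnn) hnc
  have hGτ : ∫ s in (0:ℝ)..τ, G s = ∫ s in (0:ℝ)..τ, f s :=
    intervalIntegral_flattenOn_Ioc ha hτ.1.le (fun h => hτa.not_gt h.1)
      (integrableOn_of_integrable_mu01 hu (Ioc_subset_Icc_self.trans (Icc_subset_Icc le_rfl hτ.2)))
  refine (hf.one_le_norm_toLp hA hτ hGmem hGnn
    (fun t ht => reverseHolderAt_flattenOn_Ioc (by linarith) hp.le hf.1 ha hb.le hgap ht)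
    hGτ.ge).not_gt ?_
  rw [← Real.rpow_lt_rpow_iff (norm_nonneg _) zero_le_one hp0, Real.one_rpow,
    Lp.norm_rpow_eq_integral_of_nonneg hp0 (hGnn.congr EventuallyEq.rfl hGmem.coeFn_toLp.symm)]
  calc ∫ s, hGmem.toLp G s ^ p ∂mu01 = ∫ s, G s ^ p ∂mu01 :=
        integral_congr_ae (hGmem.coeFn_toLp.fun_comp (· ^ p))
    _ < ∫ s, f s ^ p ∂mu01 := hGlt
    _ = ‖f‖ ^ p := (Lp.norm_rpow_eq_integral_of_nonneg hp0 hnn).symm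
    _ ≤ 1 := Real.rpow_le_one (norm_nonneg f) hnorm hp0.le

lemma continuousAt_primitive_of_integrable_mu01 {u : ℝ → ℝ} (hu : Integrable u mu01) {x : ℝ}
    (hx : x ∈ Ioo (0:ℝ) 1) : ContinuousAt (fun y => ∫ s in (0:ℝ)..y, u s) x := by
  have h := continuousOn_primitive_interval (a := 0) (b := 1) (μ := volume) (f := u)
    (by rw [uIcc_of_le zero_le_one]; exact integrableOn_of_integrable_mu01 hu subset_rfl)
  rw [uIcc_of_le zero_le_one] at h
  exact h.continuousAt (Icc_mem_nhds hx.1 hx.2)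

lemma eventually_rpow_mul_lt_of_continuousAt {A p τ h : ℝ} {F P : ℝ → ℝ}
    (hF : ContinuousAt F h) (hP : ContinuousAt P h) (hp : 0 ≤ p) (hh : 0 < h) (hτh : τ ≤ h)
    (hlt : h ^ (p - 1) * P h < A * F h ^ p) :
    ∀ᶠ ε in 𝓝 0, (h + ε) ^ (p - 1) * P (h + ε) < A * F (max τ (h - ε)) ^ p := by
  have hadd : ContinuousAt (fun ε : ℝ => h + ε) 0 := by fun_prop
  have hleft : ContinuousAt (fun ε => (h + ε) ^ (p - 1) * P (h + ε)) 0 :=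
    (hadd.rpow_const (Or.inl (by simpa using hh.ne'))).mul (hP.comp_of_eq hadd (add_zero h))
  have hright : ContinuousAt (fun ε => A * F (max τ (h - ε)) ^ p) 0 :=
    continuousAt_const.mul ((hF.comp_of_eq (by fun_prop) (by simp [hτh])).rpow_const (Or.inr hp))
  exact hleft.eventually_lt hright (by simpa [hτh] using hlt)

/-- if the reverse Hölder inequality is strict for the maximizer `ᾱ_τ` at some
`h ∈ [τ,1)`, then `ᾱ_τ` is (a.e.) constant on a neighbourhood of `h` in `[τ,1]`. -/
theorem maximizer_locally_constant_of_strict_inequality (A p : ℝ) (hA : 1 < A) (hp : 1 < p)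
    [Fact (1 ≤ ENNReal.ofReal p)]
    (τ : ℝ) (hτ : τ ∈ Ioc (0:ℝ) 1)
    (f : Lp ℝ (ENNReal.ofReal p) mu01) (hf : IsMaximizer A p τ f)
    (h : ℝ) (hh : h ∈ Ico τ 1)
    (hstrict : (1 / h) * ∫ s in (0:ℝ)..h, f s ^ p <
      A * ((1 / h) * ∫ s in (0:ℝ)..h, f s) ^ p) :
    ∃ ε > (0:ℝ), ∃ c : ℝ,
      ∀ᵐ s ∂volume, s ∈ Icc τ 1 → |s - h| < ε → f s = c := by
  have hp0 : 0 < p := by linarith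
  have hh0 : 0 < h := hτ.1.trans_le hh.1
  have hnn := hf.1.1
  have hint : 0 ≤ ∫ s in (0:ℝ)..h, f s := by
    rw [integral_of_le hh0.le]
    exact integral_nonneg_of_ae (ae_restrict_of_ae_mu01 hnn
      (Ioc_subset_Icc_self.trans (Icc_subset_Icc le_rfl hh.2.le)))
  rw [one_div_mul_lt_mul_rpow_iff hh0 hint] at hstrict
  have hgap := eventually_rpow_mul_lt_of_continuousAt
    (continuousAt_primitive_of_integrable_mu01 ((Lp.memLp f).integrable Fact.out) ⟨hh0, hh.2⟩)
    (continuousAt_primitive_of_integrable_mu01 ((Lp.memLp f).integrable_rpow_of_nonneg hp0 hnn)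
      ⟨hh0, hh.2⟩) hp0.le hh0 hh.1 hstrict
  obtain ⟨ε, ⟨hgapε, hε1⟩, hε0⟩ := (((hgap.and (eventually_lt_nhds (sub_pos.2 hh.2))).filter_mono
      nhdsWithin_le_nhds).and (self_mem_nhdsWithin (s := Ioi 0))).exists
  have hconst := hf.ae_eq_setAverage_Ioc hA.le hp hτ (le_max_left τ (h - ε)) (by linarith)
    hgapε.le
  rw [EventuallyEq, Measure.restrict_congr_set Ioc_ae_eq_Icc,
    ae_restrict_iff' measurableSet_Icc] at hconst
  refine ⟨ε, hε0, _, hconst.mono fun s hs hsτ hsh => hs ?_⟩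
  rw [abs_lt] at hsh
  exact ⟨max_le hsτ.1 (by linarith), by linarith⟩
end
end
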